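/- arXiv:1507.06953 — 5 statements merged into one kernel-verified Lean document; each statement's English description precedes it below -/
import Mathlib

section
/- There exists a constant c > 0 such that for every integer k ≥ 2 and every integer d ≥ 1 there exists a k-decomposable permutation X ∈ S_{k^d} with OPT(X) ≥ c · k^d · log₂ k. -/
open scoped Classical

/-! ### Geometric BST model: point sets, satisfied sets, OPT -/

/-- `r` lies in the closed axis-parallel rectangle with corners `p` and `q`. -/
def InRect {α β : Type*} [LinearOrder α] [LinearOrder β] (p q r : α × β) : Prop :=
  min p.1 q.1 ≤ r.1 ∧ r.1 ≤ max p.1 q.1 ∧ min p.2 q.2 ≤ r.2 ∧ r.2 ≤ max p.2 q.2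

/-- A finite point set is arborally satisfied. -/
def Satisfied {α β : Type*} [LinearOrder α] [LinearOrder β] (P : Finset (α × β)) : Prop :=
  ∀ p ∈ P, ∀ q ∈ P, p.1 ≠ q.1 → p.2 ≠ q.2 → ∃ r ∈ P, r ≠ p ∧ r ≠ q ∧ InRect p q r

/-- `OPT X` : minimum cardinality of an arborally satisfied superset of `X`. -/
noncomputable def OPT {α β : Type*} [LinearOrder α] [LinearOrder β] (X : Finset (α × β)) : ℕ :=
  sInf { m | ∃ Y : Finset (α × β), X ⊆ Y ∧ Satisfied Y ∧ Y.card = m }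

/-! ### Permutations as functions on `[1..n]`, pattern containment -/

/-- `X` is a permutation of `[n] = {1, …, n}`. -/
def IsPermOn (n : ℕ) (X : ℕ → ℕ) : Prop :=
  Set.BijOn X (Set.Icc 1 n) (Set.Icc 1 n)

/-- `X ∈ S_n` contains the pattern `pat ∈ S_k`. -/
def Contains (n : ℕ) (X : ℕ → ℕ) (k : ℕ) (pat : ℕ → ℕ) : Prop :=
  ∃ f : ℕ → ℕ, Set.MapsTo f (Set.Icc 1 k) (Set.Icc 1 n) ∧
    StrictMonoOn f (Set.Icc 1 k) ∧
    ∀ i ∈ Set.Icc 1 k, ∀ j ∈ Set.Icc 1 k, (pat i < pat j ↔ X (f i) < X (f j))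

/-- `X ∈ S_n` avoids the pattern `pat ∈ S_k`. -/
def Avoids (n : ℕ) (X : ℕ → ℕ) (k : ℕ) (pat : ℕ → ℕ) : Prop := ¬ Contains n X k pat

/-- The pattern (2,3,1). -/
def pat231 : ℕ → ℕ := fun i => if i = 1 then 2 else if i = 2 then 3 else if i = 3 then 1 else i

/-- The decreasing pattern (k, k-1, …, 1). -/
def patDec (k : ℕ) : ℕ → ℕ := fun i => k + 1 - i

/-- The increasing pattern (1, 2, …, k). -/
def patInc : ℕ → ℕ := id

/-- The point set `{(X t, t) : t ∈ [n]}` of a permutation of `[n]`. -/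
def permPoints (n : ℕ) (X : ℕ → ℕ) : Finset (ℤ × ℤ) :=
  (Finset.Icc 1 n).image fun t => ((X t : ℤ), (t : ℤ))

/-! ### Binary search trees on `[n]` -/

/-- Binary trees with natural-number keys. -/
inductive BTree where
  | leaf : BTree
  | node : BTree → ℕ → BTree → BTree

def BTree.keys : BTree → Finset ℕ
  | .leaf => ∅
  | .node l k r => insert k (l.keys ∪ r.keys)

def BTree.isSearch : BTree → Prop
  | .leaf => True
  | .node l k r => (∀ y ∈ l.keys, y < k) ∧ (∀ y ∈ r.keys, k < y) ∧ l.isSearch ∧ r.isSearch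

/-- `T` is a binary search tree on `[n] = {1, …, n}`. -/
def IsBSTOn (T : BTree) (n : ℕ) : Prop := T.keys = Finset.Icc 1 n ∧ T.isSearch

/-- Depth of the node labeled `x` (root has depth 1; `0` if `x` is absent). -/
def BTree.depthOf : BTree → ℕ → ℕ
  | .leaf, _ => 0
  | .node l k r, x =>
      if x = k then 1
      else max (if l.depthOf x = 0 then 0 else l.depthOf x + 1)
               (if r.depthOf x = 0 then 0 else r.depthOf x + 1)

/-- Maximum depth of a key of `[n]` in `T`. -/
def BTree.maxDepth (T : BTree) (n : ℕ) : ℕ := (Finset.Icc 1 n).sup T.depthOf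

/-- The geometric encoding of the initial tree `T`:
the stack of points `(x, s)` for `-(d - d_T(x)) ≤ s ≤ 0`. -/
noncomputable def initialSet (T : BTree) (n : ℕ) : Finset (ℕ × ℤ) :=
  (Finset.Icc 1 n).biUnion fun x =>
    (Finset.Icc (-((T.maxDepth n : ℤ) - (T.depthOf x : ℤ))) 0).image fun s => (x, s)

/-! ### Greedy (and its one-sided variants) -/

/-- `tau S b` : last time at which element `b` is touched in the point set `S`
(defaults to `0` if `b` never occurs in `S`). -/
noncomputable def tau (S : Finset (ℕ × ℤ)) (b : ℕ) : ℤ :=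
  WithBot.unbotD 0 ((S.filter (fun p => p.1 = b)).image Prod.snd).max

/-- `tauAt G b t` : last time `≤ t` at which element `b` is touched in the point set `G`. -/
noncomputable def tauAt (G : Finset (ℕ × ℤ)) (b : ℕ) (t : ℤ) : ℤ :=
  WithBot.unbotD 0 ((G.filter (fun p => p.1 = b ∧ p.2 ≤ t)).image Prod.snd).max

/-- The closed rectangle with corners `p` and `q` contains no point of `S`
other than (possibly) `p` and `q`. -/
def RectEmpty (S : Finset (ℕ × ℤ)) (p q : ℕ × ℤ) : Prop :=
  ∀ r ∈ S, InRect p q r → r = p ∨ r = q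

/-- One step of (one-sided) Greedy: access element `a` at time `t`, starting from point set `S`.
`side a b` restricts which elements may be touched (`fun _ _ => True` for plain Greedy,
`fun a b => a < b` for GreedyRight, `fun a b => b < a` for GreedyLeft). -/
noncomputable def greedyStep (n : ℕ) (side : ℕ → ℕ → Prop) (S : Finset (ℕ × ℤ))
    (a : ℕ) (t : ℤ) : Finset (ℕ × ℤ) :=
  insert (a, t) (S ∪
    ((Finset.Icc 1 n).filter (fun b => side a b ∧
        (S.filter (fun p => p.1 = b)).Nonempty ∧
        RectEmpty S (a, t) (b, tau S b))).image (fun b => (b, t)))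

/-- The full output of (one-sided) Greedy on `X` at times `1, …, n`,
starting from the point set `init`. -/
noncomputable def greedyRun (n : ℕ) (side : ℕ → ℕ → Prop) (X : ℕ → ℕ)
    (init : Finset (ℕ × ℤ)) : Finset (ℕ × ℤ) :=
  (List.range n).foldl (fun S t => greedyStep n side S (X (t + 1)) ((t : ℤ) + 1)) init

/-- Cost of Greedy on permutation `X` of `[n]` with initial tree `T`:
the number of points of the output at times `≥ 1`. -/
noncomputable def greedyCostT (T : BTree) (n : ℕ) (X : ℕ → ℕ) : ℕ :=
  ((greedyRun n (fun _ _ => True) X (initialSet T n)).filter (fun p => 1 ≤ p.2)).card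

/-- Cost of Greedy on permutation `X` of `[n]` run without initial tree. -/
noncomputable def greedyCost (n : ℕ) (X : ℕ → ℕ) : ℕ :=
  (greedyRun n (fun _ _ => True) X ∅).card

/-- Cost of Signed Greedy on permutation `X` of `[n]` with initial tree `T`:
cardinality of the union of the GreedyLeft and GreedyRight outputs at times `≥ 1`. -/
noncomputable def sgreedyCostT (T : BTree) (n : ℕ) (X : ℕ → ℕ) : ℕ :=
  ((greedyRun n (fun a b => b < a) X (initialSet T n) ∪
      greedyRun n (fun a b => a < b) X (initialSet T n)).filter (fun p => 1 ≤ p.2)).card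

/-! ### Inverse Ackermann -/

/-- The inverse Ackermann function `α(n) = min {m : A(m,m) ≥ n}`. -/
noncomputable def invAck (n : ℕ) : ℕ := sInf { m | n ≤ ack m m }

/-! ### Blocks, simple permutations, `k`-decomposability -/

/-- `[a,b]` is a block of the permutation `X` of `[n]`:
a contiguous interval of positions mapped onto a contiguous interval of values. -/
def IsBlockOf (n : ℕ) (X : ℕ → ℕ) (a b : ℕ) : Prop :=
  1 ≤ a ∧ a ≤ b ∧ b ≤ n ∧ ∃ c : ℕ, X '' Set.Icc a b = Set.Icc c (c + (b - a))

/-- A permutation of `[l]` is simple (non-decomposable): it has no block of size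
strictly between `1` and `l`. -/
def IsSimplePerm (l : ℕ) (σ : ℕ → ℕ) : Prop :=
  ∀ a b : ℕ, IsBlockOf l σ a b → a = b ∨ (a = 1 ∧ b = l)

/-- The permutation of `[b - a + 1]` order-isomorphic to the restriction of `X`
to the block `[a, b]`. -/
noncomputable def blockRestrict (X : ℕ → ℕ) (a b : ℕ) : ℕ → ℕ :=
  fun j => X (a + j - 1) + 1 - sInf (X '' Set.Icc a b)

/-- `X ∈ S_n` is `k`-decomposable: `n = 1`, or `[n]` can be partitioned into at least 2
and at most `k` consecutive intervals, each a block of `X`, such that the permutation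
order-isomorphic to the restriction of `X` to each block is again `k`-decomposable. -/
inductive KDecomposable (k : ℕ) : ℕ → (ℕ → ℕ) → Prop where
  | base : ∀ X : ℕ → ℕ, KDecomposable k 1 X
  | step : ∀ (n : ℕ) (X : ℕ → ℕ) (m : ℕ) (c : ℕ → ℕ),
      2 ≤ m → m ≤ k → c 0 = 1 → c m = n + 1 →
      (∀ i < m, c i < c (i + 1)) →
      (∀ i < m, IsBlockOf n X (c i) (c (i + 1) - 1)) →
      (∀ i < m, KDecomposable k (c (i + 1) - c i) (blockRestrict X (c i) (c (i + 1) - 1))) →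
      KDecomposable k n X

/-! ### Auxiliary: bit reversal -/

def bitrev : ℕ → ℕ → ℕ
  | 0, _ => 0
  | h+1, x => x % 2 * 2^h + bitrev h (x / 2)

lemma bitrev_def (h x : ℕ) : bitrev (h+1) x = x % 2 * 2^h + bitrev h (x / 2) := rfl

lemma bitrev_lt : ∀ h x, x < 2^h → bitrev h x < 2^h := by
  intro h
  induction h with
  | zero => intro x hx; simpa [bitrev] using hx
  | succ h ih =>
    intro x hx
    have hp : (2:ℕ)^(h+1) = 2 * 2^h := by ring
    have h1 : x / 2 < 2^h := by omega
    have h2 := ih (x / 2) h1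
    have h3 : x % 2 ≤ 1 := by omega
    rw [bitrev_def]
    nlinarith [h2, h3]

lemma bitrev_even (h s : ℕ) : bitrev (h+1) (2*s) = bitrev h s := by
  rw [bitrev_def, Nat.mul_mod_right, Nat.mul_div_cancel_left _ (by norm_num : 0 < 2)]
  simp

lemma bitrev_odd (h s : ℕ) : bitrev (h+1) (2*s+1) = 2^h + bitrev h s := by
  rw [bitrev_def]
  have e1 : (2*s+1) % 2 = 1 := by omega
  have e2 : (2*s+1) / 2 = s := by omega
  rw [e1, e2]; ring

lemma bitrev_snoc : ∀ h x, x < 2^(h+1) → bitrev (h+1) x = bitrev h (x % 2^h) * 2 + x / 2^h := by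
  intro h
  induction h with
  | zero => intro x hx; interval_cases x <;> simp [bitrev]
  | succ h ih =>
    intro x hx
    have hp : (2:ℕ)^(h+2) = 2 * 2^(h+1) := by ring
    have hx2 : x / 2 < 2^(h+1) := by omega
    have e1 : bitrev (h+2) x = x % 2 * 2^(h+1) + (bitrev h ((x/2) % 2^h) * 2 + (x/2) / 2^h) := by
      rw [bitrev_def, ih (x/2) hx2]
    have e2 : (x/2) % 2^h = (x % 2^(h+1)) / 2 := by
      rw [show (2:ℕ)^(h+1) = 2 * 2^h by ring, Nat.mod_mul_right_div_self]
    have e3 : (x/2) / 2^h = x / 2^(h+1) := by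
      rw [Nat.div_div_eq_div_mul, show (2:ℕ)^(h+1) = 2 * 2^h by ring]
    have e4 : (x % 2^(h+1)) % 2 = x % 2 := by
      rw [Nat.mod_mod_of_dvd]
      exact ⟨2^h, by ring⟩
    rw [e1, e2, e3, bitrev_def, e4]
    ring

lemma bitrev_bitrev : ∀ h x, x < 2^h → bitrev h (bitrev h x) = x := by
  intro h
  induction h with
  | zero => intro x hx; simp [bitrev]; omega
  | succ h ih =>
    intro x hx
    have hp : (2:ℕ)^(h+1) = 2 * 2^h := by ring
    have hx2 : x / 2 < 2^h := by omega
    have hb : bitrev h (x / 2) < 2^h := bitrev_lt h _ hx2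
    have hlt : bitrev (h+1) x < 2^(h+1) := bitrev_lt (h+1) x hx
    rw [bitrev_snoc h _ hlt]
    have e1 : bitrev (h+1) x % 2^h = bitrev h (x / 2) := by
      rw [bitrev_def, Nat.add_mod, Nat.mul_mod_left]
      simp [Nat.mod_eq_of_lt hb]
    have e2 : bitrev (h+1) x / 2^h = x % 2 := by
      rw [bitrev_def, mul_comm, Nat.mul_add_div (Nat.pow_pos (n := h) (by norm_num : 0 < 2)),
        Nat.div_eq_of_lt hb, add_zero]
    rw [e1, e2, ih _ hx2]
    omega

/-! ### Auxiliary: the inflation (tensor power) permutation -/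

lemma split_div {n : ℕ} (a c : ℕ) (hn : 0 < n) (hc : c < n) :
    (n * a + c) / n = a ∧ (n * a + c) % n = c := by
  constructor
  · rw [Nat.mul_add_div hn, Nat.div_eq_of_lt hc, add_zero]
  · rw [Nat.mul_add_mod, Nat.mod_eq_of_lt hc]

/-- the `d`-fold inflation of the (0-indexed) permutation `σ0` of `{0,…,k-1}`. -/
def infl (k : ℕ) (σ0 : ℕ → ℕ) : ℕ → ℕ → ℕ
  | 0, _ => 1
  | d+1, t => σ0 ((t-1) / k^d) * k^d + infl k σ0 d ((t-1) % k^d + 1)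

lemma infl_eq {k : ℕ} (σ0 : ℕ → ℕ) (d j u : ℕ) (hk : 0 < k) (h1 : 1 ≤ u) (h2 : u ≤ k^d)
    (hj : j < k) :
    infl k σ0 (d+1) (k^d * j + u) = σ0 j * k^d + infl k σ0 d u := by
  have hkd : 0 < k^d := Nat.pow_pos hk
  have he : k^d * j + u - 1 = k^d * j + (u - 1) := by omega
  obtain ⟨e1, e2⟩ := split_div j (u-1) hkd (by omega)
  show σ0 ((k^d * j + u - 1) / k^d) * k^d + infl k σ0 d ((k^d * j + u - 1) % k^d + 1) = _
  rw [he, e1, e2]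
  congr 2
  omega

lemma digit_decomp {k d t : ℕ} (hk : 0 < k) (h1 : 1 ≤ t) (h2 : t ≤ k^(d+1)) :
    ∃ j u, j < k ∧ 1 ≤ u ∧ u ≤ k^d ∧ t = k^d * j + u := by
  have hkd : 0 < k^d := Nat.pow_pos hk
  have hmlt := Nat.mod_lt (t-1) hkd
  have hdm := Nat.div_add_mod (t-1) (k^d)
  refine ⟨(t-1)/k^d, (t-1) % k^d + 1, ?_, Nat.succ_le_succ (Nat.zero_le _), by omega, by omega⟩
  rw [Nat.div_lt_iff_lt_mul hkd]
  have : k^(d+1) = k * k^d := by ring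
  omega

section Infl

variable {k : ℕ} {σ0 : ℕ → ℕ} (hk : 2 ≤ k) (hσ : ∀ a < k, σ0 a < k)

include hk hσ

lemma infl_mem : ∀ d t, 1 ≤ t → t ≤ k^d →
    1 ≤ infl k σ0 d t ∧ infl k σ0 d t ≤ k^d := by
  intro d
  induction d with
  | zero => intro t h1 h2; simp [infl]
  | succ d ih =>
    intro t h1 h2
    obtain ⟨j, u, hj, hu1, hu2, rfl⟩ := digit_decomp (by omega) h1 h2
    rw [infl_eq σ0 d j u (by omega) hu1 hu2 hj]
    have hiu := ih u hu1 hu2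
    have hs := hσ _ hj
    have h3 : σ0 j * k^d ≤ (k-1) * k^d := Nat.mul_le_mul_right _ (by omega)
    have h4 : (k-1) * k^d + k^d = k^(d+1) := by
      have : k^(d+1) = k * k^d := by ring
      have h5 : (k-1) * k^d + k^d = k * k^d := by
        have h6 : k - 1 + 1 = k := by omega
        calc (k-1) * k^d + k^d = (k - 1 + 1) * k^d := by ring
        _ = k * k^d := by rw [h6]
      omega
    omega

lemma infl_invol (hσ2 : ∀ a < k, σ0 (σ0 a) = a) :
    ∀ d t, 1 ≤ t → t ≤ k^d → infl k σ0 d (infl k σ0 d t) = t := by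
  intro d
  induction d with
  | zero => intro t h1 h2; simp only [infl]; simp only [pow_zero] at h2; omega
  | succ d ih =>
    intro t h1 h2
    obtain ⟨j, u, hj, hu1, hu2, rfl⟩ := digit_decomp (by omega) h1 h2
    rw [infl_eq σ0 d j u (by omega) hu1 hu2 hj]
    have hiu := infl_mem hk hσ d u hu1 hu2
    have hs := hσ _ hj
    have e : σ0 j * k^d + infl k σ0 d u = k^d * σ0 j + infl k σ0 d u := by ring
    rw [e, infl_eq σ0 d (σ0 j) _ (by omega) hiu.1 hiu.2 hs, hσ2 _ hj, ih u hu1 hu2]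
    ring

lemma infl_perm (hσ2 : ∀ a < k, σ0 (σ0 a) = a) (d : ℕ) :
    IsPermOn (k^d) (infl k σ0 d) := by
  have hmt : Set.MapsTo (infl k σ0 d) (Set.Icc 1 (k^d)) (Set.Icc 1 (k^d)) := by
    intro t ht
    simp only [Set.mem_Icc] at ht ⊢
    exact infl_mem hk hσ d t ht.1 ht.2
  have hinv : Set.InvOn (infl k σ0 d) (infl k σ0 d) (Set.Icc 1 (k^d)) (Set.Icc 1 (k^d)) := by
    constructor <;> intro t ht <;> exact infl_invol hk hσ hσ2 d t ht.1 ht.2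
  exact Set.InvOn.bijOn hinv hmt hmt

/-- bottom-digit (leaf) structure of the inflation -/
lemma infl_leaf : ∀ d, 1 ≤ d → ∃ W : ℕ → ℕ, ∀ t, 1 ≤ t → t ≤ k^d →
    infl k σ0 d t = k * W ((t-1)/k) + σ0 ((t-1) % k) + 1 := by
  intro d
  induction d with
  | zero => omega
  | succ d ih =>
    intro _
    rcases Nat.eq_or_lt_of_le (Nat.zero_le d) with hd0 | hd1
    · -- d = 0 : one level
      subst hd0
      refine ⟨fun _ => 0, ?_⟩
      intro t h1 h2
      rw [pow_one] at h2
      have e1 : (t-1)/k = 0 := Nat.div_eq_of_lt (by omega)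
      have e2 : (t-1)%k = t-1 := Nat.mod_eq_of_lt (by omega)
      rw [e1, e2]
      show σ0 ((t-1)/k^0) * k^0 + infl k σ0 0 ((t-1) % k^0 + 1) = _
      simp [infl]
    · obtain ⟨W, hW⟩ := ih (by omega)
      have hkd1 : 0 < k^(d-1) := Nat.pow_pos (by omega)
      have hdd : d - 1 + 1 = d := by omega
      have hpow : k^d = k * k^(d-1) := by
        conv_lhs => rw [← hdd]
        ring
      refine ⟨fun j => σ0 (j / k^(d-1)) * k^(d-1) + W (j % k^(d-1)), ?_⟩
      intro t h1 h2
      obtain ⟨j, u, hj, hu1, hu2, rfl⟩ := digit_decomp (by omega) h1 h2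
      rw [infl_eq σ0 d j u (by omega) hu1 hu2 hj, hW u hu1 hu2]
      have hk0 : 0 < k := by omega
      have hdm : k^d * j + u - 1 = k^d * j + (u - 1) := by omega
      have hmod : (k^d * j + u - 1) % k = (u - 1) % k := by
        rw [hdm, hpow, mul_assoc, Nat.mul_add_mod]
      have hdiv : (k^d * j + u - 1) / k = k^(d-1) * j + (u - 1)/k := by
        rw [hdm, hpow, mul_assoc, Nat.mul_add_div hk0]
      have hult : (u-1)/k < k^(d-1) := by
        rw [Nat.div_lt_iff_lt_mul hk0]
        have : k^(d-1) * k = k^d := by rw [hpow]; ring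
        omega
      obtain ⟨f1, f2⟩ := split_div j ((u-1)/k) hkd1 hult
      simp only [hmod, hdiv, f1, f2]
      rw [hpow]
      ring

end Infl

/-! ### Auxiliary: k-decomposability of the inflation -/

lemma chain_mono (c : ℕ → ℕ) (m : ℕ) (h : ∀ i < m, c i < c (i+1)) :
    ∀ i j, i ≤ j → j ≤ m → c i ≤ c j := by
  intro i j hij hjm
  induction j with
  | zero =>
    have : i = 0 := by omega
    subst this; exact le_refl _
  | succ j ihj =>
    rcases Nat.eq_or_lt_of_le hij with rfl | hlt
    · exact le_refl _
    · have h1 := h j (by omega)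
      have h2 := ihj (by omega) (by omega)
      omega

lemma kdec_congr {k : ℕ} : ∀ {n : ℕ} {F : ℕ → ℕ}, KDecomposable k n F →
    ∀ G : ℕ → ℕ, (∀ j, 1 ≤ j → j ≤ n → F j = G j) → KDecomposable k n G := by
  intro n F hF
  induction hF with
  | base X => intro G _; exact KDecomposable.base G
  | step n X m c h2m hmk hc0 hcm hmono hblocks hsub ih =>
    intro G hG
    have hcm' : ∀ i ≤ m, c i ≤ n + 1 := by
      intro i hi
      rw [← hcm]
      exact chain_mono c m hmono i m hi le_rfl
    have hc1 : ∀ i ≤ m, 1 ≤ c i := by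
      intro i hi
      rw [← hc0]
      exact chain_mono c m hmono 0 i (Nat.zero_le _) hi
    have hicc : ∀ i < m, ∀ x ∈ Set.Icc (c i) (c (i+1) - 1), X x = G x := by
      intro i hi x hx
      obtain ⟨hx1, hx2⟩ := hx
      have h1 := hc1 i (by omega)
      have h2 := hcm' (i+1) (by omega)
      have h3 := hmono i hi
      exact hG x (by omega) (by omega)
    have himeq : ∀ i < m, X '' Set.Icc (c i) (c (i+1) - 1) = G '' Set.Icc (c i) (c (i+1) - 1) := by
      intro i hi
      exact Set.image_congr (hicc i hi)
    refine KDecomposable.step n G m c h2m hmk hc0 hcm hmono ?_ ?_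
    · intro i hi
      obtain ⟨ha1, hab, hbn, c', him⟩ := hblocks i hi
      exact ⟨ha1, hab, hbn, c', (himeq i hi) ▸ him⟩
    · intro i hi
      apply ih i hi
      intro j hj1 hj2
      unfold blockRestrict
      rw [himeq i hi]
      have h3 := hmono i hi
      have hv : X (c i + j - 1) = G (c i + j - 1) := by
        apply hicc i hi
        constructor <;> omega
      rw [hv]

section InflDec

variable {k : ℕ} {σ0 : ℕ → ℕ} (hk : 2 ≤ k) (hσ : ∀ a < k, σ0 a < k)
  (hσ2 : ∀ a < k, σ0 (σ0 a) = a)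

include hk hσ hσ2

lemma kdec_infl : ∀ d, KDecomposable k (k^d) (infl k σ0 d) := by
  intro d
  induction d with
  | zero =>
    rw [pow_zero]
    exact KDecomposable.base _
  | succ d ih =>
    have hkd : 0 < k^d := Nat.pow_pos (by omega)
    have hperm := infl_perm hk hσ hσ2 d
    have hpow : k^(d+1) = k^d * k := pow_succ k d
    have himg : ∀ i < k, (infl k σ0 (d+1)) '' Set.Icc (k^d*i+1) (k^d*(i+1)) =
        Set.Icc (σ0 i * k^d + 1) (σ0 i * k^d + k^d) := by
      intro i hi
      have he : k^d*(i+1) = k^d*i + k^d := by ring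
      ext y
      simp only [Set.mem_image, Set.mem_Icc]
      constructor
      · rintro ⟨t, ⟨ht1, ht2⟩, rfl⟩
        set u := t - k^d*i with hu
        have htu : t = k^d * i + u := by omega
        have hu1 : 1 ≤ u := by omega
        have hu2 : u ≤ k^d := by omega
        rw [htu, infl_eq σ0 d i u (by omega) hu1 hu2 hi]
        have := infl_mem hk hσ d u hu1 hu2
        omega
      · rintro ⟨hy1, hy2⟩
        have hw1 : 1 ≤ y - σ0 i * k^d := by omega
        have hw2 : y - σ0 i * k^d ≤ k^d := by omega
        obtain ⟨u, hu, huw⟩ := hperm.2.2 (Set.mem_Icc.mpr ⟨hw1, hw2⟩)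
        obtain ⟨hu1, hu2⟩ := Set.mem_Icc.mp hu
        refine ⟨k^d * i + u, ⟨by omega, by omega⟩, ?_⟩
        rw [infl_eq σ0 d i u (by omega) hu1 hu2 hi, huw]
        omega
    refine KDecomposable.step _ _ k (fun i => k^d * i + 1) hk (le_refl k) (by simp)
      (by show k^d * k + 1 = k^(d+1) + 1; rw [hpow]) ?_ ?_ ?_
    · intro i hi
      show k^d*i+1 < k^d*(i+1)+1
      have he : k^d*(i+1) = k^d*i + k^d := by ring
      omega
    · intro i hi
      show IsBlockOf (k^(d+1)) (infl k σ0 (d+1)) (k^d*i+1) (k^d*(i+1)+1-1)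
      have he : k^d*(i+1) = k^d*i + k^d := by ring
      have hbn : k^d*(i+1) ≤ k^(d+1) := by
        rw [hpow]
        exact Nat.mul_le_mul_left _ (by omega)
      simp only [he] at hbn ⊢
      refine ⟨by omega, by omega, by omega, σ0 i * k^d + 1, ?_⟩
      rw [show k^d*i + k^d = k^d*(i+1) by ring]
      have hend : k^d * (i+1) + 1 - 1 = k^d*(i+1) := by omega
      rw [hend, himg i hi,
        show σ0 i * k^d + 1 + (k^d*(i+1) - (k^d*i+1)) = σ0 i*k^d + k^d from by omega]
    · intro i hi
      show KDecomposable k (k^d*(i+1)+1 - (k^d*i+1))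
        (blockRestrict (infl k σ0 (d+1)) (k^d*i+1) (k^d*(i+1)+1-1))
      have he : k^d*(i+1) = k^d*i + k^d := by ring
      have hsize : k^d * (i+1) + 1 - (k^d * i + 1) = k^d := by omega
      rw [hsize]
      apply kdec_congr ih
      intro j hj1 hj2
      unfold blockRestrict
      have hend : k^d * (i+1) + 1 - 1 = k^d*(i+1) := by omega
      rw [hend, himg i hi]
      have hinf : sInf (Set.Icc (σ0 i * k^d + 1) (σ0 i * k^d + k^d)) = σ0 i * k^d + 1 :=
        csInf_Icc (by omega)
      rw [hinf]
      have harg : k^d * i + 1 + j - 1 = k^d * i + j := by omega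
      rw [harg, infl_eq σ0 d i j (by omega) hj1 hj2 hi]
      have := infl_mem hk hσ d j hj1 hj2
      omega

end InflDec

/-! ### Auxiliary: the lower bound for satisfied supersets of bit-reversal patterns -/

lemma satisfied_filter (Y : Finset (ℤ × ℤ)) (hY : Satisfied Y) (A B : ℤ) :
    Satisfied (Y.filter fun p => A ≤ p.1 ∧ p.1 ≤ B) := by
  intro p hp q hq hx hy
  rw [Finset.mem_filter] at hp hq
  obtain ⟨r, hr, hrp, hrq, hrect⟩ := hY p hp.1 q hq.1 hx hy
  refine ⟨r, ?_, hrp, hrq, hrect⟩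
  rw [Finset.mem_filter]
  refine ⟨hr, ?_⟩
  obtain ⟨h1, h2, -, -⟩ := hrect
  obtain ⟨hpA, hpB⟩ := hp.2
  obtain ⟨hqA, hqB⟩ := hq.2
  constructor <;> omega

/-- crossing pair sharing a row -/
lemma crossing_row (Y : Finset (ℤ × ℤ)) (hY : Satisfied Y) (M : ℤ) :
    ∀ N : ℕ, ∀ p ∈ Y, ∀ q ∈ Y, p.1 ≤ M → M < q.1 →
      ((q.1 - p.1).toNat + (q.2 - p.2).natAbs ≤ N) →
      ∃ u ∈ Y, ∃ v ∈ Y, u.2 = v.2 ∧ u.1 ≤ M ∧ M < v.1 ∧ InRect p q u ∧ InRect p q v := by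
  intro N
  induction N with
  | zero =>
    intro p hp q hq hpM hqM hm
    exact absurd hm (by omega)
  | succ N ih =>
    intro p hp q hq hpM hqM hm
    by_cases hpq : p.2 = q.2
    · exact ⟨p, hp, q, hq, hpq, hpM, hqM,
        ⟨min_le_left _ _, le_max_left _ _, min_le_left _ _, le_max_left _ _⟩,
        ⟨min_le_right _ _, le_max_right _ _, min_le_right _ _, le_max_right _ _⟩⟩
    · obtain ⟨r, hr, hrp, hrq, hrect⟩ := hY p hp q hq (by omega) hpq
      have hne : r.1 ≠ p.1 ∨ r.2 ≠ p.2 := by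
        by_contra hc
        push_neg at hc
        exact hrp (Prod.ext hc.1 hc.2)
      have hne' : r.1 ≠ q.1 ∨ r.2 ≠ q.2 := by
        by_contra hc
        push_neg at hc
        exact hrq (Prod.ext hc.1 hc.2)
      obtain ⟨h1, h2, h3, h4⟩ := hrect
      by_cases hrM : r.1 ≤ M
      · obtain ⟨u, hu, v, hv, huv⟩ := ih r hr q hq hrM hqM (by omega)
        refine ⟨u, hu, v, hv, huv.1, huv.2.1, huv.2.2.1, ?_, ?_⟩
        · obtain ⟨a1, a2, a3, a4⟩ := huv.2.2.2.1
          exact ⟨by omega, by omega, by omega, by omega⟩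
        · obtain ⟨a1, a2, a3, a4⟩ := huv.2.2.2.2
          exact ⟨by omega, by omega, by omega, by omega⟩
      · obtain ⟨u, hu, v, hv, huv⟩ := ih p hp r hr hpM (by omega) (by omega)
        refine ⟨u, hu, v, hv, huv.1, huv.2.1, huv.2.2.1, ?_, ?_⟩
        · obtain ⟨a1, a2, a3, a4⟩ := huv.2.2.2.1
          exact ⟨by omega, by omega, by omega, by omega⟩
        · obtain ⟨a1, a2, a3, a4⟩ := huv.2.2.2.2
          exact ⟨by omega, by omega, by omega, by omega⟩

/-- the key lower bound: a satisfied set containing a copy of the bit-reversal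
permutation of order `2^h` inside the column strip `[A, B]` has, inside that strip,
at least `h·2^(h-1)` more points than occupied rows. -/
lemma lemmaE : ∀ h : ℕ, ∀ Y : Finset (ℤ × ℤ), Satisfied Y →
    ∀ f g : ℕ → ℤ, ∀ A B : ℤ,
    StrictMonoOn f (Set.Icc 1 (2^h)) → StrictMonoOn g (Set.Icc 1 (2^h)) →
    A ≤ f 1 → f (2^h) ≤ B →
    (∀ t, 1 ≤ t → t ≤ 2^h → ((f (1 + bitrev h (t-1))), g t) ∈ Y) →
    ((Y.filter fun p => A ≤ p.1 ∧ p.1 ≤ B).image Prod.snd).card + h * 2^(h-1)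
      ≤ (Y.filter fun p => A ≤ p.1 ∧ p.1 ≤ B).card := by
  intro h
  induction h with
  | zero =>
    intro Y hY f g A B hf hg hA hB hpts
    simpa using Finset.card_image_le
  | succ h ih =>
    intro Y hY f g A B hf hg hA hB hpts
    have hpow : (2:ℕ)^(h+1) = 2 * 2^h := by ring
    have h2h1 : (1:ℕ) ≤ 2^h := Nat.one_le_two_pow
    have hmem : ∀ v : ℕ, 1 ≤ v → v ≤ 2^(h+1) → v ∈ Set.Icc 1 (2^(h+1)) := by
      intro v h1 h2; exact ⟨h1, h2⟩
    have hfmono : ∀ v w : ℕ, 1 ≤ v → v ≤ w → w ≤ 2^(h+1) → f v ≤ f w := by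
      intro v w h1 h2 h3
      rcases eq_or_lt_of_le h2 with rfl | hlt
      · exact le_refl _
      · exact le_of_lt (hf (hmem v h1 (by omega)) (hmem w (by omega) h3) hlt)
    have hfstrict : ∀ v w : ℕ, 1 ≤ v → v < w → w ≤ 2^(h+1) → f v < f w := by
      intro v w h1 h2 h3
      exact hf (hmem v h1 (by omega)) (hmem w (by omega) h3) h2
    set M := f (2^h) with hM
    have hAM : A ≤ M := le_trans hA (hfmono 1 (2^h) le_rfl h2h1 (by omega))
    have hMB : M ≤ B := le_trans (hfmono (2^h) (2^(h+1)) h2h1 (by omega) le_rfl) hB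
    set Y' := Y.filter (fun p => A ≤ p.1 ∧ p.1 ≤ B) with hY'
    set YL := Y.filter (fun p => A ≤ p.1 ∧ p.1 ≤ M) with hYL
    set YR := Y.filter (fun p => M + 1 ≤ p.1 ∧ p.1 ≤ B) with hYR
    have hYLeq : YL = Y'.filter (fun p => p.1 ≤ M) := by
      rw [hYL, hY', Finset.filter_filter]
      apply Finset.filter_congr
      intro p _
      constructor
      · intro ⟨a, b⟩; exact ⟨⟨a, by omega⟩, b⟩
      · intro ⟨⟨a, _⟩, b⟩; exact ⟨a, b⟩
    have hYReq : YR = Y'.filter (fun p => ¬ p.1 ≤ M) := by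
      rw [hYR, hY', Finset.filter_filter]
      apply Finset.filter_congr
      intro p _
      constructor
      · intro ⟨a, b⟩; exact ⟨⟨by omega, b⟩, by omega⟩
      · intro ⟨⟨_, b⟩, c⟩; exact ⟨by omega, b⟩
    have hsplit : YL.card + YR.card = Y'.card := by
      rw [hYLeq, hYReq]
      exact Finset.card_filter_add_card_filter_not _
    have hL := ih Y hY f (fun s => g (2*s - 1)) A M
      (hf.mono (by intro v hv; exact ⟨hv.1, by simp at hv ⊢; omega⟩))
      (by
        intro a ha b hb hab
        simp only [Set.mem_Icc] at ha hb
        exact hg ⟨by omega, by omega⟩ ⟨by omega, by omega⟩ (by omega))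
      hA le_rfl
      (by
        intro t h1 h2
        have := hpts (2*t - 1) (by omega) (by omega)
        have e : 2*t - 1 - 1 = 2*(t-1) := by omega
        rw [e, bitrev_even] at this
        exact this)
    have hR := ih Y hY (fun v => f (2^h + v)) (fun s => g (2*s)) (M+1) B
      (by
        intro a ha b hb hab
        simp only [Set.mem_Icc] at ha hb
        exact hfstrict _ _ (by omega) (by omega) (by omega))
      (by
        intro a ha b hb hab
        simp only [Set.mem_Icc] at ha hb
        exact hg ⟨by omega, by omega⟩ ⟨by omega, by omega⟩ (by omega))
      (by
        show M + 1 ≤ f (2^h + 1)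
        have : M < f (2^h + 1) := hfstrict _ _ h2h1 (by omega) (by omega)
        omega)
      (by
        show f (2^h + 2^h) ≤ B
        rw [show 2^h + 2^h = 2^(h+1) by omega]
        exact hB)
      (by
        intro t h1 h2
        have := hpts (2*t) (by omega) (by omega)
        have e : 2*t - 1 = 2*(t-1) + 1 := by omega
        rw [e, bitrev_odd] at this
        show (f (2^h + (1 + bitrev h (t-1))), g (2*t)) ∈ Y
        have e2 : 2^h + (1 + bitrev h (t-1)) = 1 + (2^h + bitrev h (t-1)) := by omega
        rw [e2]
        exact this)
    have hL' : (YL.image Prod.snd).card + h * 2^(h-1) ≤ YL.card := hL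
    have hR' : (YR.image Prod.snd).card + h * 2^(h-1) ≤ YR.card := hR
    clear hL hR
    have hclaim : ∀ s : ℕ, 1 ≤ s → s ≤ 2^h →
        ∃ y : ℤ, y ∈ (YL.image Prod.snd ∩ YR.image Prod.snd) ∧
          g (2*s - 1) ≤ y ∧ y ≤ g (2*s) := by
      intro s h1 h2
      have hb : bitrev h (s-1) < 2^h := bitrev_lt h (s-1) (by omega)
      set p : ℤ × ℤ := (f (1 + bitrev h (s-1)), g (2*s - 1)) with hp
      set q : ℤ × ℤ := (f (1 + (2^h + bitrev h (s-1))), g (2*s)) with hq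
      have hpY : p ∈ Y := by
        have := hpts (2*s - 1) (by omega) (by omega)
        have e : 2*s - 1 - 1 = 2*(s-1) := by omega
        rw [e, bitrev_even] at this
        exact this
      have hqY : q ∈ Y := by
        have := hpts (2*s) (by omega) (by omega)
        have e : 2*s - 1 = 2*(s-1) + 1 := by omega
        rw [e, bitrev_odd] at this
        exact this
      have hp1 : p.1 ≤ M := hfmono _ _ (by omega) (by omega) (by omega)
      have hp1' : A ≤ p.1 := le_trans hA (hfmono 1 _ le_rfl (by omega) (by omega))
      have hq1 : M < q.1 := hfstrict _ _ h2h1 (by omega) (by omega)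
      have hq1' : q.1 ≤ B := le_trans (hfmono _ (2^(h+1)) (by omega) (by omega) le_rfl) hB
      have hpY' : p ∈ Y' := Finset.mem_filter.mpr ⟨hpY, hp1', by omega⟩
      have hqY' : q ∈ Y' := Finset.mem_filter.mpr ⟨hqY, by omega, hq1'⟩
      obtain ⟨u, hu, v, hv, huv2, hu1, hv1, hru, hrv⟩ :=
        crossing_row Y' (satisfied_filter Y hY A B) M
          ((q.1 - p.1).toNat + (q.2 - p.2).natAbs) p hpY' q hqY' hp1 hq1 le_rfl
      have hg12 : g (2*s - 1) < g (2*s) := hg ⟨by omega, by omega⟩ ⟨by omega, by omega⟩ (by omega)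
      have hp2 : p.2 = g (2*s - 1) := rfl
      have hq2 : q.2 = g (2*s) := rfl
      refine ⟨u.2, ?_, ?_, ?_⟩
      · rw [Finset.mem_inter]
        constructor
        · apply Finset.mem_image_of_mem
          rw [hYLeq, Finset.mem_filter]
          exact ⟨hu, hu1⟩
        · rw [huv2]
          apply Finset.mem_image_of_mem
          rw [hYReq, Finset.mem_filter]
          exact ⟨hv, by omega⟩
      · obtain ⟨-, -, a3, -⟩ := hru
        rw [hp2, hq2] at a3; omega
      · obtain ⟨-, -, -, a4⟩ := hru
        rw [hp2, hq2] at a4; omega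
    set φ : ℕ → ℤ := fun s => if hs : 1 ≤ s ∧ s ≤ 2^h then (hclaim s hs.1 hs.2).choose else 0
      with hφ
    have hφspec : ∀ s, 1 ≤ s → s ≤ 2^h →
        φ s ∈ (YL.image Prod.snd ∩ YR.image Prod.snd) ∧ g (2*s - 1) ≤ φ s ∧ φ s ≤ g (2*s) := by
      intro s h1 h2
      rw [hφ]
      simp only [dif_pos (⟨h1, h2⟩ : 1 ≤ s ∧ s ≤ 2^h)]
      exact (hclaim s h1 h2).choose_spec
    have hinter : 2^h ≤ (YL.image Prod.snd ∩ YR.image Prod.snd).card := by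
      have : (Finset.Icc 1 (2^h)).card ≤ (YL.image Prod.snd ∩ YR.image Prod.snd).card := by
        apply Finset.card_le_card_of_injOn φ
        · intro s hs
          rw [Finset.coe_Icc, Set.mem_Icc] at hs
          exact (hφspec s hs.1 hs.2).1
        · intro a ha b hb hab
          rw [Finset.coe_Icc, Set.mem_Icc] at ha hb
          by_contra hne
          have key : ∀ x y : ℕ, 1 ≤ x → x < y → y ≤ 2^h → φ x < φ y := by
            intro x y hx hxy hy
            have s1 := (hφspec x hx (by omega)).2.2
            have s2 := (hφspec y (by omega) hy).2.1
            have : g (2*x) < g (2*y - 1) :=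
              hg ⟨by omega, by omega⟩ ⟨by omega, by omega⟩ (by omega)
            omega
          rcases lt_trichotomy a b with hlt | heq | hgt
          · exact absurd hab (ne_of_lt (key a b ha.1 hlt hb.2))
          · exact hne heq
          · exact absurd hab.symm (ne_of_lt (key b a hb.1 hgt ha.2))
      simpa using this
    have hYunion : Y' = YL ∪ YR := by
      rw [hYLeq, hYReq]
      exact (Finset.filter_union_filter_not_eq _ _).symm
    have hrowsplit : Y'.image Prod.snd = YL.image Prod.snd ∪ YR.image Prod.snd := by
      rw [hYunion, Finset.image_union]
    have hcards : (YL.image Prod.snd).card + (YR.image Prod.snd).card =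
        (Y'.image Prod.snd).card + (YL.image Prod.snd ∩ YR.image Prod.snd).card := by
      rw [hrowsplit]
      exact (Finset.card_union_add_card_inter _ _).symm
    have harr : 2^h + 2 * (h * 2^(h-1)) = (h+1) * 2^(h+1-1) := by
      cases h with
      | zero => norm_num
      | succ m =>
        simp only [Nat.add_sub_cancel]
        ring
    omega

/-- every finite point set has a satisfied finite superset (the full grid). -/
lemma exists_satisfied_superset (X : Finset (ℤ × ℤ)) :
    ∃ Y : Finset (ℤ × ℤ), X ⊆ Y ∧ Satisfied Y := by
  refine ⟨(X.image Prod.fst) ×ˢ (X.image Prod.snd), ?_, ?_⟩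
  · intro p hp
    rw [Finset.mem_product]
    exact ⟨Finset.mem_image_of_mem _ hp, Finset.mem_image_of_mem _ hp⟩
  · intro p hp q hq hx hy
    rw [Finset.mem_product] at hp hq
    refine ⟨(p.1, q.2), ?_, ?_, ?_, ?_⟩
    · rw [Finset.mem_product]
      exact ⟨hp.1, hq.2⟩
    · intro hc
      exact hy ((congrArg Prod.snd hc).symm ▸ rfl)
    · intro hc
      exact hx ((congrArg Prod.fst hc).symm ▸ rfl)
    · exact ⟨min_le_left _ _, le_max_left _ _, min_le_right _ _, le_max_right _ _⟩


/-- There is a constant `c > 0` such that for every `k ≥ 2` and `d ≥ 1`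
there is a `k`-decomposable permutation `X ∈ S_{k^d}` with `OPT(X) ≥ c · k^d · log₂ k`. -/
theorem opt_kDecomposable_lower_bound :
    ∃ c : ℝ, 0 < c ∧ ∀ k : ℕ, 2 ≤ k → ∀ d : ℕ, 1 ≤ d →
      ∃ X : ℕ → ℕ, IsPermOn (k ^ d) X ∧ KDecomposable k (k ^ d) X ∧
        c * ((k : ℝ) ^ d) * Real.logb 2 (k : ℝ) ≤ (OPT (permPoints (k ^ d) X) : ℝ) := by
  refine ⟨1/8, by norm_num, ?_⟩
  intro k hk d hd
  set h := Nat.log 2 k with hh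
  have hh1 : 1 ≤ h := by
    have := (Nat.le_log_iff_pow_le (by norm_num) (show k ≠ 0 by omega)).mpr
      (show 2^1 ≤ k by simpa using hk)
    simpa [hh] using this
  have h2k : (2:ℕ)^h ≤ k := Nat.pow_log_le_self 2 (by omega)
  have hk2 : k < 2^(h+1) := Nat.lt_pow_succ_log_self (by norm_num) k
  set σ0 : ℕ → ℕ := fun a => if a < 2^h then bitrev h a else a with hσ0
  have hσ : ∀ a < k, σ0 a < k := by
    intro a ha
    rw [hσ0]
    by_cases hc : a < 2^h
    · simp only [if_pos hc]
      exact lt_of_lt_of_le (bitrev_lt h a hc) h2k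
    · simpa [if_neg hc] using ha
  have hσ2 : ∀ a < k, σ0 (σ0 a) = a := by
    intro a ha
    simp only [hσ0]
    by_cases hc : a < 2^h
    · rw [if_pos hc, if_pos (bitrev_lt h a hc)]
      exact bitrev_bitrev h a hc
    · rw [if_neg hc, if_neg hc]
  refine ⟨infl k σ0 d, infl_perm hk hσ hσ2 d, kdec_infl hk hσ hσ2 d, ?_⟩
  have hd1 : d - 1 + 1 = d := by omega
  have hkd1 : 0 < k^(d-1) := Nat.pow_pos (by omega)
  have hpowd : k^d = k * k^(d-1) := by
    conv_lhs => rw [← hd1]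
    ring
  obtain ⟨W, hW⟩ := infl_leaf hk hσ d hd
  have hTle : ∀ i, i < k^(d-1) → k*i + k ≤ k^d := by
    intro i hi
    have h1 : k*(i+1) ≤ k*k^(d-1) := Nat.mul_le_mul_left _ (by omega)
    have h2 : k*(i+1) = k*i + k := by ring
    omega
  have hWinj : ∀ i, i < k^(d-1) → ∀ j, j < k^(d-1) → W i = W j → i = j := by
    intro i hi j hj hij
    have hTi := hTle i hi
    have hTj := hTle j hj
    have hdm : ∀ a : ℕ, (k*a + 1 - 1)/k = a ∧ (k*a + 1 - 1) % k = 0 := by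
      intro a
      have e : k*a+1-1 = k*a+0 := by omega
      rw [e]
      exact split_div a 0 (by omega) (by omega)
    have e1 := hW (k*i+1) (by omega) (by omega)
    have e2 := hW (k*j+1) (by omega) (by omega)
    rw [(hdm i).1, (hdm i).2] at e1
    rw [(hdm j).1, (hdm j).2] at e2
    have hieq : infl k σ0 d (k*i+1) = infl k σ0 d (k*j+1) := by rw [e1, e2, hij]
    have := (infl_perm hk hσ hσ2 d).2.1
      (show k*i+1 ∈ Set.Icc 1 (k^d) from ⟨by omega, by omega⟩)
      (show k*j+1 ∈ Set.Icc 1 (k^d) from ⟨by omega, by omega⟩) hieq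
    have hkij : k*i = k*j := by omega
    exact Nat.eq_of_mul_eq_mul_left (by omega) hkij
  have hnat : k^(d-1) * (h*2^(h-1)) ≤ OPT (permPoints (k^d) (infl k σ0 d)) := by
    apply le_csInf
    · obtain ⟨Y, hXY, hsat⟩ := exists_satisfied_superset (permPoints (k^d) (infl k σ0 d))
      exact ⟨Y.card, Y, hXY, hsat, rfl⟩
    · rintro m ⟨Y, hsub, hsat, rfl⟩
      have hleaf : ∀ i, i < k^(d-1) → h*2^(h-1) ≤
          (Y.filter (fun p => ((k*W i+1 : ℕ):ℤ) ≤ p.1 ∧ p.1 ≤ ((k*W i+k : ℕ):ℤ))).card := by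
        intro i hi
        refine le_trans (Nat.le_add_left _ _)
          (lemmaE h Y hsat (fun v => ((k*W i + v : ℕ) : ℤ)) (fun s => ((k*i + s : ℕ) : ℤ))
            ((k*W i+1 : ℕ):ℤ) ((k*W i+k : ℕ):ℤ) ?_ ?_ ?_ ?_ ?_)
        · intro a ha b hb hab
          exact_mod_cast Nat.cast_lt.mpr (by omega : k*W i + a < k*W i + b)
        · intro a ha b hb hab
          exact_mod_cast Nat.cast_lt.mpr (by omega : k*i + a < k*i + b)
        · exact Nat.cast_le.mpr (by omega)
        · exact Nat.cast_le.mpr (by omega)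
        · intro t h1 h2
          have ht : t ≤ k := le_trans h2 h2k
          have hT2 : k*i + t ≤ k^d := by
            have := hTle i hi
            omega
          have hXT := hW (k*i + t) (by omega) hT2
          obtain ⟨ed, em⟩ := split_div i (t-1) (show 0 < k by omega) (by omega)
          have hT1 : k*i + t - 1 = k*i + (t-1) := by omega
          rw [hT1, ed, em] at hXT
          have hσt : σ0 (t-1) = bitrev h (t-1) := by
            simp only [hσ0]
            exact if_pos (by omega)
          have hmemX : ((infl k σ0 d (k*i+t) : ℤ), ((k*i+t : ℕ):ℤ)) ∈
              permPoints (k^d) (infl k σ0 d) :=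
            Finset.mem_image.mpr ⟨k*i+t, Finset.mem_Icc.mpr ⟨by omega, hT2⟩, rfl⟩
          have hmemY := hsub hmemX
          show (((k*W i + (1 + bitrev h (t-1)) : ℕ) : ℤ), ((k*i + t : ℕ) : ℤ)) ∈ Y
          have e3 : ((k*W i + (1 + bitrev h (t-1)) : ℕ) : ℤ) = (infl k σ0 d (k*i+t) : ℤ) := by
            rw [hXT, hσt]
            push_cast
            ring
          rw [e3]
          exact hmemY
      have hdisj : ∀ i ∈ Finset.range (k^(d-1)), ∀ j ∈ Finset.range (k^(d-1)), i ≠ j →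
          Disjoint
            (Y.filter (fun p => ((k*W i+1 : ℕ):ℤ) ≤ p.1 ∧ p.1 ≤ ((k*W i+k : ℕ):ℤ)))
            (Y.filter (fun p => ((k*W j+1 : ℕ):ℤ) ≤ p.1 ∧ p.1 ≤ ((k*W j+k : ℕ):ℤ))) := by
        intro i hi j hj hij
        rw [Finset.mem_range] at hi hj
        have hWne : W i ≠ W j := fun e => hij (hWinj i hi j hj e)
        rw [Finset.disjoint_left]
        intro p hp hp'
        rw [Finset.mem_filter] at hp hp'
        obtain ⟨-, hpi1, hpi2⟩ := hp
        obtain ⟨-, hpj1, hpj2⟩ := hp'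
        have hsep : ∀ x y : ℕ, x < y → k*x + k ≤ k*y := by
          intro x y hxy
          have h1 : k*(x+1) ≤ k*y := Nat.mul_le_mul_left _ (by omega)
          have h2 : k*(x+1) = k*x + k := by ring
          omega
        rcases Nat.lt_or_ge (W i) (W j) with hlt | hge
        · have := hsep (W i) (W j) hlt
          have hcast : ((k*W i+k : ℕ):ℤ) < ((k*W j+1 : ℕ):ℤ) := Nat.cast_lt.mpr (by omega)
          omega
        · have hlt2 : W j < W i := by omega
          have := hsep (W j) (W i) hlt2
          have hcast : ((k*W j+k : ℕ):ℤ) < ((k*W i+1 : ℕ):ℤ) := Nat.cast_lt.mpr (by omega)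
          omega
      have hsum : ∑ i ∈ Finset.range (k^(d-1)),
          (Y.filter (fun p => ((k*W i+1 : ℕ):ℤ) ≤ p.1 ∧ p.1 ≤ ((k*W i+k : ℕ):ℤ))).card
          ≤ Y.card := by
        rw [← Finset.card_biUnion hdisj]
        apply Finset.card_le_card
        intro p hp
        rw [Finset.mem_biUnion] at hp
        obtain ⟨i, -, hp⟩ := hp
        exact (Finset.mem_filter.mp hp).1
      have hconst : k^(d-1) * (h*2^(h-1)) ≤ ∑ i ∈ Finset.range (k^(d-1)),
          (Y.filter (fun p => ((k*W i+1 : ℕ):ℤ) ≤ p.1 ∧ p.1 ≤ ((k*W i+k : ℕ):ℤ))).card := by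
        calc k^(d-1) * (h*2^(h-1))
            = ∑ _i ∈ Finset.range (k^(d-1)), h*2^(h-1) := by
              rw [Finset.sum_const, Finset.card_range, smul_eq_mul]
          _ ≤ _ := Finset.sum_le_sum (fun i hi => hleaf i (Finset.mem_range.mp hi))
      omega
  -- pass to the reals
  have hO : (↑(k^(d-1) * (h*2^(h-1))) : ℝ) ≤ (OPT (permPoints (k^d) (infl k σ0 d)) : ℝ) :=
    Nat.cast_le.mpr hnat
  refine le_trans ?_ hO
  push_cast
  have hlogb : Real.logb 2 (k:ℝ) ≤ (h:ℝ)+1 := by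
    have h1 : (k:ℝ) ≤ (2:ℝ)^(h+1) := by exact_mod_cast hk2.le
    have h2 : Real.logb 2 ((2:ℝ)^(h+1)) = (h:ℝ)+1 := by
      rw [Real.logb_pow]
      simp [Real.logb_self_eq_one]
    calc Real.logb 2 (k:ℝ) ≤ Real.logb 2 ((2:ℝ)^(h+1)) :=
          Real.logb_le_logb_of_le (by norm_num) (by positivity) h1
    _ = _ := h2
  have c2 : (0:ℝ) ≤ Real.logb 2 (k:ℝ) :=
    Real.logb_nonneg (by norm_num) (by exact_mod_cast (show 1 ≤ k by omega))
  have c3 : (k:ℝ) ≤ 4 * 2^(h-1) := by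
    have h1 : (k:ℝ) ≤ (2:ℝ)^(h+1) := by exact_mod_cast hk2.le
    have e : (2:ℝ)^(h+1) = 4 * 2^(h-1) := by
      rw [show h+1 = (h-1)+2 by omega, pow_add]
      ring
    linarith
  have c4 : Real.logb 2 (k:ℝ) ≤ 2*(h:ℝ) := by
    have hhr : (1:ℝ) ≤ (h:ℝ) := by exact_mod_cast hh1
    linarith
  have hklog : (k:ℝ) * Real.logb 2 (k:ℝ) ≤ 8 * ((h:ℝ) * 2^(h-1)) := by
    calc (k:ℝ) * Real.logb 2 (k:ℝ) ≤ (4*2^(h-1)) * (2*(h:ℝ)) :=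
          mul_le_mul c3 c4 c2 (by positivity)
    _ = 8 * ((h:ℝ)*2^(h-1)) := by ring
  have hkd' : (k:ℝ)^d = (k:ℝ)^(d-1) * (k:ℝ) := by
    conv_lhs => rw [← hd1]
    rw [pow_succ]
  have hfin : (1/8:ℝ) * (k:ℝ)^d * Real.logb 2 (k:ℝ) ≤ (k:ℝ)^(d-1) * ((h:ℝ)*2^(h-1)) := by
    calc (1/8:ℝ) * (k:ℝ)^d * Real.logb 2 (k:ℝ)
        = (k:ℝ)^(d-1) * ((k:ℝ) * Real.logb 2 (k:ℝ)) * (1/8) := by rw [hkd']; ring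
      _ ≤ (k:ℝ)^(d-1) * (8 * ((h:ℝ)*2^(h-1))) * (1/8) := by
          apply mul_le_mul_of_nonneg_right
            (mul_le_mul_of_nonneg_left hklog (by positivity)) (by norm_num)
      _ = (k:ℝ)^(d-1) * ((h:ℝ)*2^(h-1)) := by ring
  linarith [hfin]
end

section
/- Let X ∈ S_n be a permutation and suppose [n] is partitioned into consecutive intervals I_1, …, I_k (left to right, k ≥ 2), each of which is a block of X. Let P_i ∈ S_{|I_i|} be the permutation order-isomorphic to the restriction of X to I_i, and let P̃ ∈ S_k be the skeleton, i.e. the permutation order-isomorphic to a tuple consisting of one representative point from each block taken in left-to-right order of the blocks. Then OPT(X) ≥ OPT(P̃) + Σ_{i=1}^{k} OPT(P_i) − k. -/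
open scoped Classical

/-! ### Auxiliary lemmas for the proof -/

section OptAux

lemma OPT_exists (X : Finset (ℤ × ℤ)) :
    ∃ Y : Finset (ℤ × ℤ), X ⊆ Y ∧ Satisfied Y ∧ Y.card = OPT X := by
  have hne : {m | ∃ Y : Finset (ℤ × ℤ), X ⊆ Y ∧ Satisfied Y ∧ Y.card = m}.Nonempty := by
    refine ⟨_, (X.image Prod.fst) ×ˢ (X.image Prod.snd), ?_, ?_, rfl⟩
    · intro p hp
      simp only [Finset.mem_product, Finset.mem_image]
      exact ⟨⟨p, hp, rfl⟩, ⟨p, hp, rfl⟩⟩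
    · intro p hp q hq h1 h2
      simp only [Finset.mem_product, Finset.mem_image] at hp hq
      refine ⟨(p.1, q.2), ?_, ?_, ?_, ?_⟩
      · simp only [Finset.mem_product, Finset.mem_image]
        exact ⟨hp.1, hq.2⟩
      · intro h
        exact h2 (by simpa using (congrArg Prod.snd h).symm)
      · intro h
        exact h1 (by simpa using congrArg Prod.fst h)
      · refine ⟨?_, ?_, ?_, ?_⟩ <;> simp
  exact Nat.sInf_mem hne

lemma OPT_le {X Y : Finset (ℤ × ℤ)} (h : X ⊆ Y) (hs : Satisfied Y) : OPT X ≤ Y.card :=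
  Nat.sInf_le ⟨Y, h, hs, rfl⟩

lemma Satisfied.filter_rect {Y : Finset (ℤ × ℤ)} (hY : Satisfied Y) (x1 x2 y1 y2 : ℤ) :
    Satisfied (Y.filter fun p => x1 ≤ p.1 ∧ p.1 ≤ x2 ∧ y1 ≤ p.2 ∧ p.2 ≤ y2) := by
  intro p hp q hq h1 h2
  simp only [Finset.mem_filter] at hp hq
  obtain ⟨r, hr, hrp, hrq, hrect⟩ := hY p hp.1 q hq.1 h1 h2
  refine ⟨r, Finset.mem_filter.2 ⟨hr, ?_⟩, hrp, hrq, hrect⟩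
  obtain ⟨a1, a2, a3, a4⟩ := hrect
  obtain ⟨b1, b2, b3, b4⟩ := hp.2
  obtain ⟨c1, c2, c3, c4⟩ := hq.2
  refine ⟨?_, ?_, ?_, ?_⟩ <;> omega

lemma inRect_self_left (a b : ℤ × ℤ) : InRect a b a := by
  obtain ⟨a1, a2⟩ := a; obtain ⟨b1, b2⟩ := b
  refine ⟨?_, ?_, ?_, ?_⟩ <;> simp [min_le_left, le_max_left]

lemma inRect_self_right (a b : ℤ × ℤ) : InRect a b b := by
  obtain ⟨a1, a2⟩ := a; obtain ⟨b1, b2⟩ := b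
  refine ⟨?_, ?_, ?_, ?_⟩ <;> simp [min_le_right, le_max_right]

lemma inRect_trans_left {a b r x : ℤ × ℤ} (h1 : InRect a b r) (h2 : InRect r b x) :
    InRect a b x := by
  obtain ⟨p1, p2, p3, p4⟩ := h1
  obtain ⟨q1, q2, q3, q4⟩ := h2
  refine ⟨?_, ?_, ?_, ?_⟩ <;> omega

lemma inRect_trans_right {a b r x : ℤ × ℤ} (h1 : InRect a b r) (h2 : InRect a r x) :
    InRect a b x := by
  obtain ⟨p1, p2, p3, p4⟩ := h1
  obtain ⟨q1, q2, q3, q4⟩ := h2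
  refine ⟨?_, ?_, ?_, ?_⟩ <;> omega

lemma eq_of_corner_left {a b r : ℤ × ℤ} (h1 : InRect a b r) (h2 : InRect r b a) : r = a := by
  obtain ⟨p1, p2, p3, p4⟩ := h1
  obtain ⟨q1, q2, q3, q4⟩ := h2
  have e1 : r.1 = a.1 := by omega
  have e2 : r.2 = a.2 := by omega
  exact Prod.ext e1 e2

lemma eq_of_corner_right {a b r : ℤ × ℤ} (h1 : InRect a b r) (h2 : InRect a r b) : r = b := by
  obtain ⟨p1, p2, p3, p4⟩ := h1
  obtain ⟨q1, q2, q3, q4⟩ := h2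
  have e1 : r.1 = b.1 := by omega
  have e2 : r.2 = b.2 := by omega
  exact Prod.ext e1 e2

lemma satisfied_image {f g : ℤ → ℤ} (hf : Monotone f) (hg : Monotone g)
    {Y : Finset (ℤ × ℤ)} (hY : Satisfied Y) :
    Satisfied (Y.image fun p => (f p.1, g p.2)) := by
  have key : ∀ N : ℕ, ∀ a ∈ Y, ∀ b ∈ Y, f a.1 ≠ f b.1 → g a.2 ≠ g b.2 →
      (Y.filter fun r => InRect a b r).card ≤ N →
      ∃ r ∈ Y, InRect a b r ∧ ¬(f r.1 = f a.1 ∧ g r.2 = g a.2) ∧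
        ¬(f r.1 = f b.1 ∧ g r.2 = g b.2) := by
    intro N
    induction N with
    | zero =>
      intro a ha b hb h1 h2 hcard
      exfalso
      have hmem : a ∈ Y.filter fun r => InRect a b r :=
        Finset.mem_filter.2 ⟨ha, inRect_self_left a b⟩
      have := Finset.card_pos.2 ⟨a, hmem⟩
      omega
    | succ N ih =>
      intro a ha b hb h1 h2 hcard
      have hx : a.1 ≠ b.1 := fun h => h1 (by rw [h])
      have hy : a.2 ≠ b.2 := fun h => h2 (by rw [h])
      obtain ⟨r, hr, hra, hrb, hrect⟩ := hY a ha b hb hx hy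
      by_cases cA : f r.1 = f a.1 ∧ g r.2 = g a.2
      · -- r collapses onto a; recurse on (r, b)
        have hfr : f r.1 ≠ f b.1 := by rw [cA.1]; exact h1
        have hgr : g r.2 ≠ g b.2 := by rw [cA.2]; exact h2
        have hsub : (Y.filter fun x => InRect r b x) ⊂ (Y.filter fun x => InRect a b x) := by
          refine Finset.ssubset_iff_of_subset ?_ |>.2 ?_
          · intro x hxm
            rw [Finset.mem_filter] at hxm ⊢
            exact ⟨hxm.1, inRect_trans_left hrect hxm.2⟩
          · refine ⟨a, Finset.mem_filter.2 ⟨ha, inRect_self_left a b⟩, ?_⟩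
            rw [Finset.mem_filter]
            rintro ⟨-, hbad⟩
            exact hra (eq_of_corner_left hrect hbad)
        have hcard' : (Y.filter fun x => InRect r b x).card ≤ N := by
          have := Finset.card_lt_card hsub
          omega
        obtain ⟨r', hr', hrect', hne1, hne2⟩ := ih r hr b hb hfr hgr hcard'
        refine ⟨r', hr', inRect_trans_left hrect hrect', ?_, hne2⟩
        rw [← cA.1, ← cA.2]
        exact hne1
      · by_cases cB : f r.1 = f b.1 ∧ g r.2 = g b.2
        · -- r collapses onto b; recurse on (a, r)
          have hfr : f a.1 ≠ f r.1 := by rw [cB.1]; exact h1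
          have hgr : g a.2 ≠ g r.2 := by rw [cB.2]; exact h2
          have hsub : (Y.filter fun x => InRect a r x) ⊂ (Y.filter fun x => InRect a b x) := by
            refine Finset.ssubset_iff_of_subset ?_ |>.2 ?_
            · intro x hxm
              rw [Finset.mem_filter] at hxm ⊢
              exact ⟨hxm.1, inRect_trans_right hrect hxm.2⟩
            · refine ⟨b, Finset.mem_filter.2 ⟨hb, inRect_self_right a b⟩, ?_⟩
              rw [Finset.mem_filter]
              rintro ⟨-, hbad⟩
              exact hrb (eq_of_corner_right hrect hbad)
          have hcard' : (Y.filter fun x => InRect a r x).card ≤ N := by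
            have := Finset.card_lt_card hsub
            omega
          obtain ⟨r', hr', hrect', hne1, hne2⟩ := ih a ha r hr hfr hgr hcard'
          refine ⟨r', hr', inRect_trans_right hrect hrect', hne1, ?_⟩
          rw [← cB.1, ← cB.2]
          exact hne2
        · exact ⟨r, hr, hrect, cA, cB⟩
  intro p hp q hq h1 h2
  simp only [Finset.mem_image] at hp hq
  obtain ⟨a, ha, rfl⟩ := hp
  obtain ⟨b, hb, rfl⟩ := hq
  simp only at h1 h2
  obtain ⟨r, hr, hrect, hne1, hne2⟩ :=
    key Y.card a ha b hb h1 h2 (Finset.card_le_card (Finset.filter_subset _ _))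
  obtain ⟨s1, s2, s3, s4⟩ := hrect
  refine ⟨(f r.1, g r.2), Finset.mem_image.2 ⟨r, hr, rfl⟩, ?_, ?_, ?_, ?_, ?_, ?_⟩
  · intro h
    exact hne1 ⟨congrArg Prod.fst h, congrArg Prod.snd h⟩
  · intro h
    exact hne2 ⟨congrArg Prod.fst h, congrArg Prod.snd h⟩
  · simpa only [← hf.map_min] using hf s1
  · simpa only [← hf.map_max] using hf s2
  · simpa only [← hg.map_min] using hg s3
  · simpa only [← hg.map_max] using hg s4

noncomputable def collapseFun (n k : ℕ) (g : ℤ → ℕ) : ℤ → ℤ :=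
  fun v => if v < 1 then v else if (n : ℤ) < v then v - (n : ℤ) + k else (g v : ℤ)

lemma collapseFun_mid (n k : ℕ) (g : ℤ → ℕ) (v : ℤ) (h1 : 1 ≤ v) (h2 : v ≤ (n : ℤ)) :
    collapseFun n k g v = (g v : ℤ) := by
  unfold collapseFun
  rw [if_neg (by omega), if_neg (by omega)]

lemma collapseFun_monotone (n k : ℕ) (g : ℤ → ℕ)
    (hmono : ∀ ⦃v w : ℤ⦄, 1 ≤ v → v ≤ w → w ≤ (n : ℤ) → g v ≤ g w)
    (hbounds : ∀ v : ℤ, 1 ≤ v → v ≤ (n : ℤ) → 1 ≤ g v ∧ g v ≤ k) :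
    Monotone (collapseFun n k g) := by
  intro v w hvw
  unfold collapseFun
  split_ifs <;> try omega
  all_goals try { have hb' := hbounds w (by omega) (by omega); omega }
  all_goals try { have hb := hbounds v (by omega) (by omega); omega }
  all_goals {
    have h1 := hmono (v := v) (w := w) (by omega) hvw (by omega)
    omega }

noncomputable def dlo (X c : ℕ → ℕ) (i : ℕ) : ℕ := sInf (X '' Set.Icc (c (i - 1)) (c i - 1))

noncomputable def ehi (X c : ℕ → ℕ) (i : ℕ) : ℕ := dlo X c i + (c i - 1 - c (i - 1))

end OptAux

/-- If `[n]` is partitioned into `k ≥ 2` consecutive intervals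
`I_i = [c (i-1), c i - 1]` (for `i = 1, …, k`), each a block of the permutation `X ∈ S_n`,
`P_i` is the permutation order-isomorphic to `X` on `I_i`, and `skel ∈ S_k` is the skeleton
(order-isomorphic to representatives, say first elements, of the blocks), then
`OPT(X) ≥ OPT(skel) + Σᵢ OPT(P_i) − k`. -/
theorem opt_decomposition_lower_bound (n k : ℕ) (hk : 2 ≤ k)
    (X : ℕ → ℕ) (hX : IsPermOn n X)
    (c : ℕ → ℕ) (h0 : c 0 = 1) (hlast : c k = n + 1)
    (hmono : ∀ i < k, c i < c (i + 1))
    (hblock : ∀ i < k, IsBlockOf n X (c i) (c (i + 1) - 1))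
    (skel : ℕ → ℕ) (hskel : IsPermOn k skel)
    (hiso : ∀ i ∈ Set.Icc 1 k, ∀ j ∈ Set.Icc 1 k,
      (skel i < skel j ↔ X (c (i - 1)) < X (c (j - 1)))) :
    OPT (permPoints k skel) +
        (Finset.Icc 1 k).sum
          (fun i => OPT (permPoints (c i - c (i - 1)) (blockRestrict X (c (i - 1)) (c i - 1)))) ≤
      OPT (permPoints n X) + k := by
  classical
  -- monotonicity of the cut sequence c
  have cstep : ∀ j, j ≤ k → ∀ i, i < j → c i < c j := by
    intro j
    induction j with
    | zero => intro _ i h; omega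
    | succ m ih =>
      intro hj i hij
      have hm : c m < c (m + 1) := hmono m (by omega)
      rcases Nat.lt_succ_iff_lt_or_eq.mp hij with h | h
      · exact lt_trans (ih (by omega) i h) hm
      · subst h; exact hm
  have cle : ∀ i j, i ≤ j → j ≤ k → c i ≤ c j := by
    intro i j hij hj
    rcases eq_or_lt_of_le hij with h | h
    · rw [h]
    · exact le_of_lt (cstep j hj i h)
  have hc1 : ∀ i, i ≤ k → 1 ≤ c i := by
    intro i hi
    have := cle 0 i (by omega) hi
    omega
  have hcn : ∀ i, i ≤ k → c i ≤ n + 1 := by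
    intro i hi
    have := cle i k hi le_rfl
    omega
  have hab : ∀ i, 1 ≤ i → i ≤ k → 1 ≤ c (i - 1) ∧ c (i - 1) ≤ c i - 1 ∧ c i - 1 ≤ n := by
    intro i h1 h2
    have h3 := hc1 (i - 1) (by omega)
    have h4 := hcn i h2
    have h5 := cstep i h2 (i - 1) (by omega)
    omega
  -- the value interval of each block
  have himg : ∀ i, 1 ≤ i → i ≤ k →
      X '' Set.Icc (c (i - 1)) (c i - 1) = Set.Icc (dlo X c i) (ehi X c i) := by
    intro i h1 h2
    have hb := hblock (i - 1) (by omega)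
    rw [show i - 1 + 1 = i from by omega] at hb
    obtain ⟨-, -, -, c0, hc0⟩ := hb
    have hmem : c0 ∈ X '' Set.Icc (c (i - 1)) (c i - 1) := by
      rw [hc0]
      exact Set.mem_Icc.2 ⟨le_refl _, by omega⟩
    have hdc : dlo X c i = c0 := by
      have hle : dlo X c i ≤ c0 := Nat.sInf_le hmem
      have hge : c0 ≤ dlo X c i := by
        have hm := Nat.sInf_mem (⟨c0, hmem⟩ : (X '' Set.Icc (c (i - 1)) (c i - 1)).Nonempty)
        have hm2 : dlo X c i ∈ Set.Icc c0 (c0 + (c i - 1 - c (i - 1))) := by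
          rw [← hc0]
          exact hm
        exact (Set.mem_Icc.1 hm2).1
      omega
    rw [hc0]
    unfold ehi
    rw [hdc]
  have hdei : ∀ i, dlo X c i ≤ ehi X c i := by
    intro i
    unfold ehi
    omega
  have hXin : ∀ s, 1 ≤ s → s ≤ n → 1 ≤ X s ∧ X s ≤ n := by
    intro s h1 h2
    exact Set.mem_Icc.1 (hX.mapsTo (Set.mem_Icc.2 ⟨h1, h2⟩))
  have hXmem : ∀ i, 1 ≤ i → i ≤ k → ∀ s, c (i - 1) ≤ s → s ≤ c i - 1 →
      dlo X c i ≤ X s ∧ X s ≤ ehi X c i := by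
    intro i h1 h2 s hs1 hs2
    have : X s ∈ Set.Icc (dlo X c i) (ehi X c i) := by
      rw [← himg i h1 h2]
      exact ⟨s, Set.mem_Icc.2 ⟨hs1, hs2⟩, rfl⟩
    exact Set.mem_Icc.1 this
  have hde : ∀ i, 1 ≤ i → i ≤ k → 1 ≤ dlo X c i ∧ ehi X c i ≤ n := by
    intro i h1 h2
    obtain ⟨g1, g2, g3⟩ := hab i h1 h2
    have h3 := hXmem i h1 h2 (c (i - 1)) le_rfl g2
    have h6 := hXin (c (i - 1)) (by omega) (by omega)
    have h4 : ehi X c i ∈ Set.Icc (dlo X c i) (ehi X c i) :=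
      Set.mem_Icc.2 ⟨hdei i, le_rfl⟩
    rw [← himg i h1 h2] at h4
    obtain ⟨s, hs, hXs⟩ := h4
    rw [Set.mem_Icc] at hs
    have h5 := hXin s (by omega) (by omega)
    have h4' : dlo X c i ∈ Set.Icc (dlo X c i) (ehi X c i) := Set.mem_Icc.2 ⟨le_rfl, hdei i⟩
    rw [← himg i h1 h2] at h4'
    obtain ⟨s0, hs0, hXs0⟩ := h4'
    rw [Set.mem_Icc] at hs0
    have h5' := hXin s0 (by omega) (by omega)
    omega
  -- disjointness of value intervals
  have hVdisj : ∀ i j, 1 ≤ i → i ≤ k → 1 ≤ j → j ≤ k → i ≠ j →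
      ∀ v, dlo X c i ≤ v → v ≤ ehi X c i → dlo X c j ≤ v → v ≤ ehi X c j → False := by
    intro i j hi1 hi2 hj1 hj2 hij v hv1 hv2 hv3 hv4
    have h1 : v ∈ Set.Icc (dlo X c i) (ehi X c i) := Set.mem_Icc.2 ⟨hv1, hv2⟩
    have h2 : v ∈ Set.Icc (dlo X c j) (ehi X c j) := Set.mem_Icc.2 ⟨hv3, hv4⟩
    rw [← himg i hi1 hi2] at h1
    rw [← himg j hj1 hj2] at h2
    obtain ⟨s, hs, hXs⟩ := h1
    obtain ⟨s', hs', hXs'⟩ := h2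
    rw [Set.mem_Icc] at hs hs'
    obtain ⟨gi1, gi2, gi3⟩ := hab i hi1 hi2
    obtain ⟨gj1, gj2, gj3⟩ := hab j hj1 hj2
    have hss : s = s' := by
      apply hX.injOn (Set.mem_Icc.2 ⟨by omega, by omega⟩) (Set.mem_Icc.2 ⟨by omega, by omega⟩)
      rw [hXs, hXs']
    rcases Nat.lt_or_ge i j with h | h
    · have := cle i (j - 1) (by omega) (by omega)
      have := hc1 i (by omega)
      omega
    · have := cle j (i - 1) (by omega) (by omega)
      have := hc1 j (by omega)
      omega
  have hblow : ∀ i j, 1 ≤ i → i ≤ k → 1 ≤ j → j ≤ k → i ≠ j → dlo X c i < dlo X c j →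
      ehi X c i < dlo X c j := by
    intro i j hi1 hi2 hj1 hj2 hij h
    by_contra hcon
    exact hVdisj i j hi1 hi2 hj1 hj2 hij (dlo X c j) (by omega) (by omega) le_rfl (hdei j)
  have hdinj : ∀ i j, 1 ≤ i → i ≤ k → 1 ≤ j → j ≤ k → dlo X c i = dlo X c j → i = j := by
    intro i j hi1 hi2 hj1 hj2 h
    by_contra hij
    have := hdei j
    exact hVdisj i j hi1 hi2 hj1 hj2 hij (dlo X c i) le_rfl (hdei i) (by omega) (by omega)
  have hord : ∀ i j, 1 ≤ i → i ≤ k → 1 ≤ j → j ≤ k → i ≠ j → dlo X c i < dlo X c j →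
      X (c (i - 1)) < X (c (j - 1)) := by
    intro i j hi1 hi2 hj1 hj2 hij h
    obtain ⟨gi1, gi2, -⟩ := hab i hi1 hi2
    obtain ⟨gj1, gj2, -⟩ := hab j hj1 hj2
    have h1 := hXmem i hi1 hi2 (c (i - 1)) le_rfl gi2
    have h2 := hXmem j hj1 hj2 (c (j - 1)) le_rfl gj2
    have h3 := hblow i j hi1 hi2 hj1 hj2 hij h
    omega
  have hskelmem : ∀ i, 1 ≤ i → i ≤ k → 1 ≤ skel i ∧ skel i ≤ k := by
    intro i h1 h2
    exact Set.mem_Icc.1 (hskel.mapsTo (Set.mem_Icc.2 ⟨h1, h2⟩))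
  have hordiff : ∀ i j, 1 ≤ i → i ≤ k → 1 ≤ j → j ≤ k →
      (skel i ≤ skel j ↔ dlo X c i ≤ dlo X c j) := by
    intro i j hi1 hi2 hj1 hj2
    by_cases hij : i = j
    · subst hij; simp
    constructor
    · intro h
      by_contra hcon
      have h4 := hord j i hj1 hj2 hi1 hi2 (Ne.symm hij) (by omega)
      have h5 := (hiso j (Set.mem_Icc.2 ⟨hj1, hj2⟩) i (Set.mem_Icc.2 ⟨hi1, hi2⟩)).2 h4
      omega
    · intro h
      rcases Nat.lt_or_ge (dlo X c i) (dlo X c j) with h' | h'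
      · have h4 := hord i j hi1 hi2 hj1 hj2 hij h'
        have h5 := (hiso i (Set.mem_Icc.2 ⟨hi1, hi2⟩) j (Set.mem_Icc.2 ⟨hj1, hj2⟩)).2 h4
        omega
      · have heq : dlo X c i = dlo X c j := by omega
        exact absurd (hdinj i j hi1 hi2 hj1 hj2 heq) hij
  -- the rank identity: the count of blocks with smaller start equals the skeleton value
  have hrank : ∀ i, 1 ≤ i → i ≤ k →
      ((Finset.Icc 1 k).filter (fun j => dlo X c j ≤ dlo X c i)).card = skel i := by
    intro i hi1 hi2
    have hstep1 : (Finset.Icc 1 k).filter (fun j => dlo X c j ≤ dlo X c i)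
        = (Finset.Icc 1 k).filter (fun j => skel j ≤ skel i) := by
      ext j
      simp only [Finset.mem_filter, Finset.mem_Icc]
      constructor
      · rintro ⟨⟨h1, h2⟩, h3⟩
        exact ⟨⟨h1, h2⟩, (hordiff j i h1 h2 hi1 hi2).2 h3⟩
      · rintro ⟨⟨h1, h2⟩, h3⟩
        exact ⟨⟨h1, h2⟩, (hordiff j i h1 h2 hi1 hi2).1 h3⟩
    rw [hstep1]
    have himgeq : ((Finset.Icc 1 k).filter (fun j => skel j ≤ skel i)).image skel
        = Finset.Icc 1 (skel i) := by
      apply Finset.ext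
      intro v
      simp only [Finset.mem_image, Finset.mem_filter, Finset.mem_Icc]
      constructor
      · rintro ⟨j, ⟨⟨hj1, hj2⟩, hj3⟩, rfl⟩
        exact ⟨(hskelmem j hj1 hj2).1, hj3⟩
      · rintro ⟨hv1, hv2⟩
        have hsk := hskelmem i hi1 hi2
        obtain ⟨j, hj, hjv⟩ := hskel.surjOn (Set.mem_Icc.2 ⟨hv1, by omega⟩)
        rw [Set.mem_Icc] at hj
        refine ⟨j, ⟨hj, by omega⟩, hjv⟩
    have hinj : Set.InjOn skel ((Finset.Icc 1 k).filter (fun j => skel j ≤ skel i) : Finset ℕ) := by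
      intro x hx y hy hxy
      simp only [Finset.coe_filter, Set.mem_setOf_eq, Finset.mem_Icc] at hx hy
      exact hskel.injOn (Set.mem_Icc.2 hx.1) (Set.mem_Icc.2 hy.1) hxy
    have hci := Finset.card_image_of_injOn hinj
    rw [himgeq] at hci
    rw [← hci, Nat.card_Icc]
    omega
  -- covering: every position and value lies in some block
  have hposblk : ∀ t : ℕ, 1 ≤ t → t ≤ n → ∃ i, 1 ≤ i ∧ i ≤ k ∧ c (i - 1) ≤ t ∧ t ≤ c i - 1 := by
    intro t ht1 ht2
    have hne : ((Finset.range k).filter (fun j => c j ≤ t)).Nonempty := by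
      refine ⟨0, ?_⟩
      simp only [Finset.mem_filter, Finset.mem_range]
      exact ⟨by omega, by omega⟩
    obtain hj0mem := Finset.max'_mem _ hne
    set j0 := ((Finset.range k).filter (fun j => c j ≤ t)).max' hne with hj0
    simp only [Finset.mem_filter, Finset.mem_range] at hj0mem
    refine ⟨j0 + 1, by omega, by omega, ?_, ?_⟩
    · show c (j0 + 1 - 1) ≤ t
      rw [Nat.add_sub_cancel]
      exact hj0mem.2
    · by_contra hcon
      have h1 : c (j0 + 1) ≤ t := by omega
      rcases Nat.lt_or_ge (j0 + 1) k with h | h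
      · have := Finset.le_max' ((Finset.range k).filter (fun j => c j ≤ t)) (j0 + 1)
          (by simp only [Finset.mem_filter, Finset.mem_range]; exact ⟨h, h1⟩)
        omega
      · have hk' : j0 + 1 = k := by omega
        rw [hk', hlast] at h1
        omega
  have hvblk : ∀ m : ℕ, 1 ≤ m → m ≤ n → ∃ i, 1 ≤ i ∧ i ≤ k ∧ dlo X c i ≤ m ∧ m ≤ ehi X c i := by
    intro m h1 h2
    obtain ⟨s, hs, hXs⟩ := hX.surjOn (Set.mem_Icc.2 ⟨h1, h2⟩)
    rw [Set.mem_Icc] at hs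
    obtain ⟨i, hi1, hi2, hi3, hi4⟩ := hposblk s hs.1 hs.2
    obtain ⟨hm1, hm2⟩ := hXmem i hi1 hi2 s hi3 hi4
    exact ⟨i, hi1, hi2, by omega, by omega⟩
  -- the two coordinate collapse maps
  set f1 : ℤ → ℤ :=
    collapseFun n k (fun v => ((Finset.Icc 1 k).filter (fun j => (dlo X c j : ℤ) ≤ v)).card)
    with hf1def
  set f2 : ℤ → ℤ :=
    collapseFun n k (fun t => ((Finset.range k).filter (fun j => (c j : ℤ) ≤ t)).card)
    with hf2def
  have hmono1 : Monotone f1 := by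
    rw [hf1def]
    apply collapseFun_monotone
    · intro v w _ hvw _
      apply Finset.card_le_card
      intro j hj
      simp only [Finset.mem_filter] at hj ⊢
      exact ⟨hj.1, le_trans hj.2 hvw⟩
    · intro v h1 h2
      constructor
      · obtain ⟨i, hi1, hi2, hi3, hi4⟩ := hvblk v.toNat (by omega) (by omega)
        have hmem : i ∈ (Finset.Icc 1 k).filter (fun j => (dlo X c j : ℤ) ≤ v) := by
          simp only [Finset.mem_filter, Finset.mem_Icc]
          exact ⟨⟨hi1, hi2⟩, by omega⟩
        have := Finset.card_pos.2 ⟨i, hmem⟩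
        omega
      · calc ((Finset.Icc 1 k).filter (fun j => (dlo X c j : ℤ) ≤ v)).card
            ≤ (Finset.Icc 1 k).card := Finset.card_le_card (Finset.filter_subset _ _)
          _ = k := by rw [Nat.card_Icc]; omega
  have hmono2 : Monotone f2 := by
    rw [hf2def]
    apply collapseFun_monotone
    · intro v w _ hvw _
      apply Finset.card_le_card
      intro j hj
      simp only [Finset.mem_filter] at hj ⊢
      exact ⟨hj.1, le_trans hj.2 hvw⟩
    · intro v h1 h2
      constructor
      · have hmem : 0 ∈ (Finset.range k).filter (fun j => (c j : ℤ) ≤ v) := by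
          simp only [Finset.mem_filter, Finset.mem_range]
          refine ⟨by omega, ?_⟩
          rw [h0]
          omega
        have := Finset.card_pos.2 ⟨0, hmem⟩
        omega
      · calc ((Finset.range k).filter (fun j => (c j : ℤ) ≤ v)).card
            ≤ (Finset.range k).card := Finset.card_le_card (Finset.filter_subset _ _)
          _ = k := Finset.card_range k
  -- values of the collapse maps on block rectangles
  have hfilter1 : ∀ i, 1 ≤ i → i ≤ k → ∀ v : ℤ, (dlo X c i : ℤ) ≤ v → v ≤ (ehi X c i : ℤ) →
      ((Finset.Icc 1 k).filter (fun j => (dlo X c j : ℤ) ≤ v)).card = skel i := by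
    intro i hi1 hi2 v hv1 hv2
    rw [← hrank i hi1 hi2]
    congr 1
    ext j
    simp only [Finset.mem_filter, Finset.mem_Icc]
    constructor
    · rintro ⟨⟨hj1, hj2⟩, hdj⟩
      refine ⟨⟨hj1, hj2⟩, ?_⟩
      by_contra hcon
      have hne : i ≠ j := by rintro rfl; omega
      have := hblow i j hi1 hi2 hj1 hj2 hne (by omega)
      omega
    · rintro ⟨⟨hj1, hj2⟩, hdj⟩
      exact ⟨⟨hj1, hj2⟩, by omega⟩
  have hf1B : ∀ i, 1 ≤ i → i ≤ k → ∀ v : ℤ, (dlo X c i : ℤ) ≤ v → v ≤ (ehi X c i : ℤ) →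
      f1 v = (skel i : ℤ) := by
    intro i hi1 hi2 v h1 h2
    obtain ⟨q1, q2⟩ := hde i hi1 hi2
    rw [hf1def, collapseFun_mid n k _ v (by omega) (by omega)]
    exact_mod_cast hfilter1 i hi1 hi2 v h1 h2
  have hf2B : ∀ i, 1 ≤ i → i ≤ k → ∀ t : ℤ, (c (i - 1) : ℤ) ≤ t → t ≤ (c i : ℤ) - 1 →
      f2 t = (i : ℤ) := by
    intro i hi1 hi2 t h1 h2
    obtain ⟨q1, q2, q3⟩ := hab i hi1 hi2
    have hci1 := hc1 i (by omega)
    rw [hf2def, collapseFun_mid n k _ t (by omega) (by omega)]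
    have hfe : (Finset.range k).filter (fun j => (c j : ℤ) ≤ t) = Finset.range i := by
      ext j
      simp only [Finset.mem_filter, Finset.mem_range]
      constructor
      · rintro ⟨hj, hcj⟩
        by_contra hcon
        have h4 : c i ≤ c j := cle i j (by omega) (by omega)
        omega
      · intro hj
        have h4 : c j ≤ c (i - 1) := cle j (i - 1) (by omega) (by omega)
        exact ⟨by omega, by omega⟩
    rw [hfe, Finset.card_range]
  -- an optimal satisfied superset of the points of X
  obtain ⟨Y, hXY, hYsat, hYcard⟩ := OPT_exists (permPoints n X)
  have hYmem : ∀ s : ℕ, 1 ≤ s → s ≤ n → ((X s : ℤ), (s : ℤ)) ∈ Y := by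
    intro s h1 h2
    exact hXY (Finset.mem_image.2 ⟨s, Finset.mem_Icc.2 ⟨h1, h2⟩, rfl⟩)
  set B : ℕ → Finset (ℤ × ℤ) := fun i =>
    Y.filter (fun p => (dlo X c i : ℤ) ≤ p.1 ∧ p.1 ≤ (ehi X c i : ℤ) ∧
      (c (i - 1) : ℤ) ≤ p.2 ∧ p.2 ≤ (c i : ℤ) - 1) with hB
  have hBsub : ∀ i, B i ⊆ Y := by
    intro i
    rw [hB]
    exact Finset.filter_subset _ _
  -- each block's restricted permutation is covered by B i
  have hOPTi : ∀ i, 1 ≤ i → i ≤ k →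
      OPT (permPoints (c i - c (i - 1)) (blockRestrict X (c (i - 1)) (c i - 1))) ≤ (B i).card := by
    intro i hi1 hi2
    obtain ⟨ga, gb, gc⟩ := hab i hi1 hi2
    have hci1 := hc1 i (by omega)
    have hsat : Satisfied (B i) := by
      rw [hB]
      exact hYsat.filter_rect _ _ _ _
    have key := satisfied_image (f := fun x : ℤ => x + (1 - (dlo X c i : ℤ)))
      (g := fun x : ℤ => x + (1 - (c (i - 1) : ℤ)))
      (fun x y hxy => Int.add_le_add_right hxy _) (fun x y hxy => Int.add_le_add_right hxy _) hsat
    refine le_trans (OPT_le ?_ key) (Finset.card_image_le)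
    intro p hp
    simp only [permPoints, Finset.mem_image, Finset.mem_Icc] at hp
    obtain ⟨t, ⟨ht1, ht2⟩, rfl⟩ := hp
    have hs1 : c (i - 1) ≤ c (i - 1) + t - 1 := by omega
    have hs2 : c (i - 1) + t - 1 ≤ c i - 1 := by omega
    obtain ⟨hm1, hm2⟩ := hXmem i hi1 hi2 (c (i - 1) + t - 1) hs1 hs2
    refine Finset.mem_image.2 ⟨((X (c (i - 1) + t - 1) : ℤ), ((c (i - 1) + t - 1 : ℕ) : ℤ)), ?_, ?_⟩
    · rw [hB]
      simp only [Finset.mem_filter]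
      exact ⟨hYmem _ (by omega) (by omega), by omega, by omega, by omega, by omega⟩
    · have hbr : blockRestrict X (c (i - 1)) (c i - 1) t
          = X (c (i - 1) + t - 1) + 1 - dlo X c i := rfl
      simp only [Prod.mk.injEq]
      constructor
      · rw [hbr]
        omega
      · omega
  -- B i's are pairwise disjoint (their time intervals are)
  have hBdisj : ∀ i ∈ Finset.Icc 1 k, ∀ j ∈ Finset.Icc 1 k, i ≠ j → Disjoint (B i) (B j) := by
    intro i hi j hj hij
    simp only [Finset.mem_Icc] at hi hj
    rw [Finset.disjoint_left]
    intro p hpi hpj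
    rw [hB] at hpi hpj
    simp only [Finset.mem_filter] at hpi hpj
    obtain ⟨-, -, -, pi3, pi4⟩ := hpi
    obtain ⟨-, -, -, pj3, pj4⟩ := hpj
    rcases Nat.lt_or_ge i j with h | h
    · have h1 := cle i (j - 1) (by omega) (by omega)
      have h2 := hc1 i (by omega)
      omega
    · have hji : j < i := by omega
      have h1 := cle j (i - 1) (by omega) (by omega)
      have h2 := hc1 j (by omega)
      omega
  set U := (Finset.Icc 1 k).biUnion B with hU
  have hUsub : U ⊆ Y := by
    rw [hU]
    intro p hp
    simp only [Finset.mem_biUnion] at hp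
    obtain ⟨i, -, hpB⟩ := hp
    exact hBsub i hpB
  have hUcard : U.card = ∑ i ∈ Finset.Icc 1 k, (B i).card := Finset.card_biUnion hBdisj
  -- the skeleton bound
  have hsatY' : Satisfied (Y.image fun p => (f1 p.1, f2 p.2)) :=
    satisfied_image hmono1 hmono2 hYsat
  have hskelsub : permPoints k skel ⊆ Y.image fun p => (f1 p.1, f2 p.2) := by
    intro p hp
    simp only [permPoints, Finset.mem_image, Finset.mem_Icc] at hp
    obtain ⟨i, ⟨hi1, hi2⟩, rfl⟩ := hp
    obtain ⟨ga, gb, gc⟩ := hab i hi1 hi2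
    have hci1 := hc1 i (by omega)
    obtain ⟨hm1, hm2⟩ := hXmem i hi1 hi2 (c (i - 1)) le_rfl gb
    refine Finset.mem_image.2 ⟨((X (c (i - 1)) : ℤ), ((c (i - 1) : ℕ) : ℤ)),
      hYmem _ (by omega) (by omega), ?_⟩
    have e1 : f1 ((X (c (i - 1)) : ℕ) : ℤ) = (skel i : ℤ) :=
      hf1B i hi1 hi2 _ (by omega) (by omega)
    have e2 : f2 ((c (i - 1) : ℕ) : ℤ) = (i : ℤ) :=
      hf2B i hi1 hi2 _ (by omega) (by omega)
    simp only
    rw [e1, e2]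
  have hOPTskel : OPT (permPoints k skel) ≤ (Y \ U).card + k := by
    refine le_trans (OPT_le hskelsub hsatY') ?_
    have hsplit : Y.image (fun p => (f1 p.1, f2 p.2)) ⊆
        (Y \ U).image (fun p => (f1 p.1, f2 p.2)) ∪
          (Finset.Icc 1 k).image (fun i => ((skel i : ℤ), (i : ℤ))) := by
      intro q hq
      simp only [Finset.mem_image] at hq
      obtain ⟨p, hp, rfl⟩ := hq
      by_cases hpu : p ∈ U
      · apply Finset.mem_union_right
        rw [hU] at hpu
        simp only [Finset.mem_biUnion, Finset.mem_Icc] at hpu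
        obtain ⟨i, ⟨hi1, hi2⟩, hpB⟩ := hpu
        rw [hB] at hpB
        simp only [Finset.mem_filter] at hpB
        obtain ⟨-, b1, b2, b3, b4⟩ := hpB
        exact Finset.mem_image.2 ⟨i, Finset.mem_Icc.2 ⟨hi1, hi2⟩,
          by rw [hf1B i hi1 hi2 p.1 b1 b2, hf2B i hi1 hi2 p.2 b3 b4]⟩
      · exact Finset.mem_union_left _ (Finset.mem_image.2 ⟨p, Finset.mem_sdiff.2 ⟨hp, hpu⟩, rfl⟩)
    calc (Y.image fun p => (f1 p.1, f2 p.2)).card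
        ≤ ((Y \ U).image (fun p => (f1 p.1, f2 p.2)) ∪
            (Finset.Icc 1 k).image (fun i => ((skel i : ℤ), (i : ℤ)))).card :=
          Finset.card_le_card hsplit
      _ ≤ ((Y \ U).image (fun p => (f1 p.1, f2 p.2))).card +
            ((Finset.Icc 1 k).image (fun i => ((skel i : ℤ), (i : ℤ)))).card :=
          Finset.card_union_le _ _
      _ ≤ (Y \ U).card + k :=
          Nat.add_le_add Finset.card_image_le
            (le_trans Finset.card_image_le (by rw [Nat.card_Icc]; omega))
  have hsum : ∑ i ∈ Finset.Icc 1 k,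
      OPT (permPoints (c i - c (i - 1)) (blockRestrict X (c (i - 1)) (c i - 1)))
      ≤ ∑ i ∈ Finset.Icc 1 k, (B i).card := by
    apply Finset.sum_le_sum
    intro i hi
    simp only [Finset.mem_Icc] at hi
    exact hOPTi i hi.1 hi.2
  have hfin : (Y \ U).card + U.card = Y.card := Finset.card_sdiff_add_card_eq_card hUsub
  calc OPT (permPoints k skel) + (Finset.Icc 1 k).sum
        (fun i => OPT (permPoints (c i - c (i - 1)) (blockRestrict X (c (i - 1)) (c i - 1))))
      ≤ ((Y \ U).card + k) + ∑ i ∈ Finset.Icc 1 k, (B i).card := Nat.add_le_add hOPTskel hsum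
    _ = ((Y \ U).card + U.card) + k := by rw [hUcard]; ring
    _ = Y.card + k := by rw [hfin]
    _ = OPT (permPoints n X) + k := by rw [hYcard]
end

section
/- Let X ∈ [n]^m be an access sequence, viewed as the point set {(X(t), t) : t ∈ [m]} ⊆ ℝ×ℤ. Define split(X) ⊆ ℝ×ℤ as follows: for each t ∈ [m], split(X) contains the point (X(t), t) if t is the first time at which the value X(t) occurs in X, and the point (X(t) + t/(2m), t) otherwise. Then split(X) has pairwise distinct x-coordinates and pairwise distinct y-coordinates, and OPT(split(X)) ≤ 4 · OPT(X). -/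
open scoped Classical

/-- The point set of an access sequence `X ∈ [n]^m`, embedded in `ℝ × ℤ`. -/
noncomputable def seqPoints (m : ℕ) (X : ℕ → ℕ) : Finset (ℝ × ℤ) :=
  (Finset.Icc 1 m).image fun t => ((X t : ℝ), (t : ℤ))

/-- `split(X)`: the access `(X t, t)` is kept if `t` is the first occurrence of the value
`X t`, and is otherwise tilted to `(X t + t/(2m), t)`. -/
noncomputable def splitSeq (m : ℕ) (X : ℕ → ℕ) : Finset (ℝ × ℤ) :=
  (Finset.Icc 1 m).image fun t =>
    if ∀ s ∈ Finset.Icc 1 m, s < t → X s ≠ X t then ((X t : ℝ), (t : ℤ))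
    else ((X t : ℝ) + (t : ℝ) / (2 * (m : ℝ)), (t : ℤ))

section General

variable {α β : Type*} [LinearOrder α] [LinearOrder β]

lemma inRect_symm {p q r : α × β} (h : InRect p q r) : InRect q p r :=
  ⟨by rw [min_comm]; exact h.1, by rw [max_comm]; exact h.2.1,
   by rw [min_comm]; exact h.2.2.1, by rw [max_comm]; exact h.2.2.2⟩

lemma inRect_self_left_s12 (p q : α × β) : InRect p q p :=
  ⟨min_le_left _ _, le_max_left _ _, min_le_left _ _, le_max_left _ _⟩

lemma rect_subset {p q r w : α × β} (hr : InRect p q r) (hw : InRect r q w) :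
    InRect p q w := by
  refine ⟨le_trans (le_min hr.1 (min_le_right _ _)) hw.1,
    le_trans hw.2.1 (max_le hr.2.1 (le_max_right _ _)),
    le_trans (le_min hr.2.2.1 (min_le_right _ _)) hw.2.2.1,
    le_trans hw.2.2.2 (max_le hr.2.2.2 (le_max_right _ _))⟩

lemma eq_of_rect {p q r : α × β} (hr : InRect p q r) (hp : InRect r q p) : r = p := by
  obtain ⟨h1, h2, h3, h4⟩ := hr
  obtain ⟨g1, g2, g3, g4⟩ := hp
  have hx : r.1 = p.1 := by
    rcases le_total p.1 q.1 with h | h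
    · rw [min_eq_left h] at h1
      rw [max_eq_right h] at h2
      rcases le_total r.1 q.1 with h' | h'
      · rw [min_eq_left h'] at g1
        exact le_antisymm g1 h1
      · rw [min_eq_right h'] at g1
        have : p.1 = q.1 := le_antisymm h g1
        exact le_antisymm (h2.trans (this ▸ le_refl _)) h1
    · rw [min_eq_right h] at h1
      rw [max_eq_left h] at h2
      rcases le_total r.1 q.1 with h' | h'
      · rw [max_eq_right h'] at g2
        have : p.1 = q.1 := le_antisymm g2 h
        exact le_antisymm h2 (this ▸ h1)
      · rw [max_eq_left h'] at g2
        exact le_antisymm h2 g2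
  have hy : r.2 = p.2 := by
    rcases le_total p.2 q.2 with h | h
    · rw [min_eq_left h] at h3
      rw [max_eq_right h] at h4
      rcases le_total r.2 q.2 with h' | h'
      · rw [min_eq_left h'] at g3
        exact le_antisymm g3 h3
      · rw [min_eq_right h'] at g3
        have : p.2 = q.2 := le_antisymm h g3
        exact le_antisymm (h4.trans (this ▸ le_refl _)) h3
    · rw [min_eq_right h] at h3
      rw [max_eq_left h] at h4
      rcases le_total r.2 q.2 with h' | h'
      · rw [max_eq_right h'] at g4
        have : p.2 = q.2 := le_antisymm g4 h
        exact le_antisymm h4 (this ▸ h3)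
      · rw [max_eq_left h'] at g4
        exact le_antisymm h4 g4
  exact Prod.ext hx hy

lemma satisfied_superset_exists (S : Finset (α × β)) :
    ∃ Y : Finset (α × β), S ⊆ Y ∧ Satisfied Y := by
  refine ⟨S.image Prod.fst ×ˢ S.image Prod.snd, ?_, ?_⟩
  · intro p hp
    rw [Finset.mem_product]
    exact ⟨Finset.mem_image_of_mem _ hp, Finset.mem_image_of_mem _ hp⟩
  · intro p hp q hq hx hy
    rw [Finset.mem_product] at hp hq
    refine ⟨(p.1, q.2), ?_, ?_, ?_, ?_⟩
    · rw [Finset.mem_product]; exact ⟨hp.1, hq.2⟩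
    · intro h
      exact hy (congrArg Prod.snd h).symm
    · intro h
      have h2 := congrArg Prod.fst h
      exact hx h2
    · exact ⟨min_le_left _ _, le_max_left _ _, min_le_right _ _, le_max_right _ _⟩

lemma OPT_le_s12 {S Y : Finset (α × β)} (h1 : S ⊆ Y) (h2 : Satisfied Y) :
    OPT S ≤ Y.card :=
  Nat.sInf_le ⟨Y, h1, h2, rfl⟩

lemma OPT_spec (S : Finset (α × β)) :
    ∃ Y : Finset (α × β), S ⊆ Y ∧ Satisfied Y ∧ Y.card = OPT S := by
  obtain ⟨G, hG1, hG2⟩ := satisfied_superset_exists S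
  exact Nat.sInf_mem (⟨G.card, G, hG1, hG2, rfl⟩ :
    { m | ∃ Y : Finset (α × β), S ⊆ Y ∧ Satisfied Y ∧ Y.card = m }.Nonempty)

end General

/-! Floor projection preserves satisfaction. -/

noncomputable def fl (p : ℝ × ℤ) : ℝ × ℤ := ((⌊p.1⌋ : ℝ), p.2)

lemma floor_witness (Y : Finset (ℝ × ℤ)) (hY : Satisfied Y) :
    ∀ k : ℕ, ∀ p ∈ Y, ∀ q ∈ Y, (Y.filter (fun r => InRect p q r)).card ≤ k →
      ⌊p.1⌋ ≠ ⌊q.1⌋ → p.2 ≠ q.2 →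
      ∃ r ∈ Y, InRect p q r ∧ (⌊r.1⌋ ≠ ⌊p.1⌋ ∨ r.2 ≠ p.2) ∧
        (⌊r.1⌋ ≠ ⌊q.1⌋ ∨ r.2 ≠ q.2) := by
  intro k
  induction k with
  | zero =>
    intro p hp q hq hcard hx hy
    exfalso
    have : p ∈ Y.filter (fun r => InRect p q r) :=
      Finset.mem_filter.mpr ⟨hp, inRect_self_left_s12 p q⟩
    have := Finset.card_pos.mpr ⟨p, this⟩
    omega
  | succ k ih =>
    intro p hp q hq hcard hx hy
    have hx' : p.1 ≠ q.1 := fun h => hx (by rw [h])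
    obtain ⟨r, hr, hrp, hrq, hrect⟩ := hY p hp q hq hx' hy
    by_cases hA : ⌊r.1⌋ = ⌊p.1⌋ ∧ r.2 = p.2
    · have hnotin : ¬ InRect r q p := fun hcon => hrp (eq_of_rect hrect hcon)
      have hpmem : p ∈ Y.filter (fun w => InRect p q w) :=
        Finset.mem_filter.mpr ⟨hp, inRect_self_left_s12 p q⟩
      have hsub : Y.filter (fun w => InRect r q w) ⊆
          (Y.filter (fun w => InRect p q w)).erase p := by
        intro w hw
        rw [Finset.mem_filter] at hw
        rw [Finset.mem_erase, Finset.mem_filter]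
        exact ⟨fun h => hnotin (h ▸ hw.2), hw.1, rect_subset hrect hw.2⟩
      have hcard' : (Y.filter (fun w => InRect r q w)).card ≤ k := by
        have h1 := Finset.card_le_card hsub
        have h2 := Finset.card_erase_of_mem hpmem
        have h3 := Finset.card_pos.mpr ⟨p, hpmem⟩
        omega
      have hx2 : ⌊r.1⌋ ≠ ⌊q.1⌋ := hA.1 ▸ hx
      have hy2 : r.2 ≠ q.2 := hA.2 ▸ hy
      obtain ⟨w, hwY, hwrect, hw1, hw2⟩ := ih r hr q hq hcard' hx2 hy2
      refine ⟨w, hwY, rect_subset hrect hwrect, ?_, hw2⟩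
      rw [← hA.1, ← hA.2]
      exact hw1
    · by_cases hB : ⌊r.1⌋ = ⌊q.1⌋ ∧ r.2 = q.2
      · have hnotin : ¬ InRect p r q := by
          intro hcon
          exact hrq (eq_of_rect (inRect_symm hrect) (inRect_symm hcon))
        have hqmem : q ∈ Y.filter (fun w => InRect p q w) :=
          Finset.mem_filter.mpr ⟨hq, inRect_symm (inRect_self_left_s12 q p)⟩
        have hsub : Y.filter (fun w => InRect p r w) ⊆
            (Y.filter (fun w => InRect p q w)).erase q := by
          intro w hw
          rw [Finset.mem_filter] at hw
          rw [Finset.mem_erase, Finset.mem_filter]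
          refine ⟨fun h => hnotin (h ▸ hw.2), hw.1, ?_⟩
          exact inRect_symm (rect_subset (inRect_symm hrect) (inRect_symm hw.2))
        have hcard' : (Y.filter (fun w => InRect p r w)).card ≤ k := by
          have h1 := Finset.card_le_card hsub
          have h2 := Finset.card_erase_of_mem hqmem
          have h3 := Finset.card_pos.mpr ⟨q, hqmem⟩
          omega
        have hx2 : ⌊p.1⌋ ≠ ⌊r.1⌋ := by rw [hB.1]; exact hx
        have hy2 : p.2 ≠ r.2 := by rw [hB.2]; exact hy
        obtain ⟨w, hwY, hwrect, hw1, hw2⟩ := ih p hp r hr hcard' hx2 hy2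
        refine ⟨w, hwY, ?_, hw1, ?_⟩
        · exact inRect_symm (rect_subset (inRect_symm hrect) (inRect_symm hwrect))
        · rw [← hB.1, ← hB.2]
          exact hw2
      · exact ⟨r, hr, hrect, not_and_or.mp hA, not_and_or.mp hB⟩

lemma floor_satisfied (Y : Finset (ℝ × ℤ)) (hY : Satisfied Y) :
    Satisfied (Y.image fl) := by
  intro p' hp' q' hq' hx hy
  obtain ⟨p, hp, rfl⟩ := Finset.mem_image.mp hp'
  obtain ⟨q, hq, rfl⟩ := Finset.mem_image.mp hq'
  have hfx : ⌊p.1⌋ ≠ ⌊q.1⌋ := by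
    intro h
    apply hx
    show ((⌊p.1⌋ : ℝ)) = ((⌊q.1⌋ : ℝ))
    exact_mod_cast h
  have hfy : p.2 ≠ q.2 := hy
  obtain ⟨r, hrY, hrect, h1, h2⟩ := floor_witness Y hY Y.card p hp q hq
    (Finset.card_filter_le _ _) hfx hfy
  refine ⟨fl r, Finset.mem_image_of_mem _ hrY, ?_, ?_, ?_, ?_, ?_, ?_⟩
  · intro h
    simp only [fl, Prod.ext_iff] at h
    rcases h1 with h1 | h1
    · exact h1 (by exact_mod_cast h.1)
    · exact h1 h.2
  · intro h
    simp only [fl, Prod.ext_iff] at h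
    rcases h2 with h2 | h2
    · exact h2 (by exact_mod_cast h.1)
    · exact h2 h.2
  · show min ((⌊p.1⌋:ℝ)) ((⌊q.1⌋:ℝ)) ≤ ((⌊r.1⌋:ℝ))
    have hmono : Monotone (fun z : ℝ => ⌊z⌋) := fun a b hab => Int.floor_mono hab
    have h := Int.floor_mono hrect.1
    rw [hmono.map_min] at h
    have : min ((⌊p.1⌋:ℝ)) ((⌊q.1⌋:ℝ)) = ((min ⌊p.1⌋ ⌊q.1⌋ : ℤ) : ℝ) := by
      rcases le_total (⌊p.1⌋) (⌊q.1⌋) with h' | h'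
      · rw [min_eq_left h', min_eq_left (by exact_mod_cast h' : ((⌊p.1⌋:ℝ)) ≤ _)]
      · rw [min_eq_right h', min_eq_right (by exact_mod_cast h' : ((⌊q.1⌋:ℝ)) ≤ _)]
    rw [this]
    exact_mod_cast h
  · show ((⌊r.1⌋:ℝ)) ≤ max ((⌊p.1⌋:ℝ)) ((⌊q.1⌋:ℝ))
    have hmono : Monotone (fun z : ℝ => ⌊z⌋) := fun a b hab => Int.floor_mono hab
    have h := Int.floor_mono hrect.2.1
    rw [hmono.map_max] at h
    have : max ((⌊p.1⌋:ℝ)) ((⌊q.1⌋:ℝ)) = ((max ⌊p.1⌋ ⌊q.1⌋ : ℤ) : ℝ) := by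
      rcases le_total (⌊p.1⌋) (⌊q.1⌋) with h' | h'
      · rw [max_eq_right h', max_eq_right (by exact_mod_cast h' : ((⌊p.1⌋:ℝ)) ≤ _)]
      · rw [max_eq_left h', max_eq_left (by exact_mod_cast h' : _ ≤ ((⌊p.1⌋:ℝ)))]
    rw [this]
    exact_mod_cast h
  · exact hrect.2.2.1
  · exact hrect.2.2.2

/-! ### Tilt machinery -/

noncomputable def epsl (m : ℕ) (s : ℕ) : ℝ := ((min s m : ℕ) : ℝ) / (2 * m)

lemma epsl_nonneg (m s : ℕ) : 0 ≤ epsl m s := by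
  unfold epsl; positivity

lemma epsl_le_half (m s : ℕ) : epsl m s ≤ 1 / 2 := by
  unfold epsl
  rcases Nat.eq_zero_or_pos m with hm | hm
  · subst hm; simp
  · have h2m : (0:ℝ) < 2 * m := by positivity
    rw [div_le_div_iff₀ h2m (by norm_num)]
    have : ((min s m : ℕ) : ℝ) ≤ (m : ℝ) := by exact_mod_cast Nat.min_le_right s m
    linarith

lemma epsl_mono (m : ℕ) {s s' : ℕ} (h : s ≤ s') : epsl m s ≤ epsl m s' := by
  unfold epsl
  rcases Nat.eq_zero_or_pos m with hm | hm
  · subst hm; simp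
  · have h2m : (0:ℝ) < 2 * m := by positivity
    have hle : ((min s m : ℕ) : ℝ) ≤ ((min s' m : ℕ) : ℝ) := by
      exact_mod_cast min_le_min h (le_refl m)
    exact (div_le_div_iff_of_pos_right h2m).mpr hle

lemma epsl_zero (m : ℕ) : epsl m 0 = 0 := by simp [epsl]

noncomputable def accN (m : ℕ) (X : ℕ → ℕ) (x : ℝ) : Finset ℕ :=
  (Finset.Icc 1 m).filter (fun s => ((X s : ℕ) : ℝ) = x)

noncomputable def lastLt (m : ℕ) (X : ℕ → ℕ) (x : ℝ) (t : ℤ) : ℕ :=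
  ((accN m X x).filter (fun s : ℕ => (s : ℤ) < t)).sup id

noncomputable def lastLe (m : ℕ) (X : ℕ → ℕ) (x : ℝ) (t : ℤ) : ℕ :=
  ((accN m X x).filter (fun s : ℕ => (s : ℤ) ≤ t)).sup id

noncomputable def topA (m : ℕ) (X : ℕ → ℕ) (x : ℝ) : ℕ := (accN m X x).sup id

noncomputable def tiltSet (m : ℕ) (X : ℕ → ℕ) (x : ℝ) (t : ℤ) : Finset ℝ :=
  {0, epsl m (lastLt m X x t), epsl m (lastLe m X x t), epsl m (topA m X x)}

noncomputable def spread (m : ℕ) (X : ℕ → ℕ) (Y₀ : Finset (ℝ × ℤ)) : Finset (ℝ × ℤ) :=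
  Y₀.biUnion fun p => (tiltSet m X p.1 p.2).image fun e => (p.1 + e, p.2)

lemma sup_id_mem_or (S : Finset ℕ) : S.sup id ∈ S ∨ S.sup id = 0 := by
  rcases S.eq_empty_or_nonempty with h | h
  · right; simp [h]
  · left
    obtain ⟨b, hb, he⟩ := Finset.exists_mem_eq_sup S h id
    rw [he]; exact hb

lemma lastLt_le_lastLe (m : ℕ) (X : ℕ → ℕ) (x : ℝ) (t : ℤ) :
    lastLt m X x t ≤ lastLe m X x t := by
  unfold lastLt lastLe
  apply Finset.sup_mono
  intro a ha
  rw [Finset.mem_filter] at ha ⊢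
  exact ⟨ha.1, le_of_lt ha.2⟩

lemma lastLe_le_topA (m : ℕ) (X : ℕ → ℕ) (x : ℝ) (t : ℤ) :
    lastLe m X x t ≤ topA m X x := by
  unfold lastLe topA
  exact Finset.sup_mono (Finset.filter_subset _ _)

lemma lastLe_le_lastLt (m : ℕ) (X : ℕ → ℕ) (x : ℝ) {t t' : ℤ} (h : t < t') :
    lastLe m X x t ≤ lastLt m X x t' := by
  unfold lastLt lastLe
  apply Finset.sup_mono
  intro a ha
  rw [Finset.mem_filter] at ha ⊢
  exact ⟨ha.1, lt_of_le_of_lt ha.2 h⟩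

lemma le_lastLe (m : ℕ) (X : ℕ → ℕ) (x : ℝ) {a : ℕ} {t : ℤ}
    (ha : a ∈ accN m X x) (h : (a : ℤ) ≤ t) : a ≤ lastLe m X x t := by
  unfold lastLe
  exact Finset.le_sup (f := id) (Finset.mem_filter.mpr ⟨ha, h⟩)

lemma lastLe_acc (m : ℕ) (X : ℕ → ℕ) (x : ℝ) {a : ℕ} (ha : a ∈ accN m X x) :
    lastLe m X x (a : ℤ) = a := by
  apply le_antisymm
  · unfold lastLe
    apply Finset.sup_le
    intro b hb
    rw [Finset.mem_filter] at hb
    exact_mod_cast hb.2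
  · exact le_lastLe m X x ha le_rfl

lemma lastLt_spec (m : ℕ) (X : ℕ → ℕ) (x : ℝ) (t : ℤ)
    (h : lastLt m X x t ≠ 0) :
    lastLt m X x t ∈ accN m X x ∧ ((lastLt m X x t : ℕ) : ℤ) < t := by
  unfold lastLt at h ⊢
  rcases sup_id_mem_or ((accN m X x).filter (fun s : ℕ => (s : ℤ) < t)) with hm | hm
  · exact Finset.mem_filter.mp hm
  · exact absurd hm h

lemma lastLe_spec (m : ℕ) (X : ℕ → ℕ) (x : ℝ) (t : ℤ)
    (h : lastLe m X x t ≠ 0) :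
    lastLe m X x t ∈ accN m X x ∧ ((lastLe m X x t : ℕ) : ℤ) ≤ t := by
  unfold lastLe at h ⊢
  rcases sup_id_mem_or ((accN m X x).filter (fun s : ℕ => (s : ℤ) ≤ t)) with hm | hm
  · exact Finset.mem_filter.mp hm
  · exact absurd hm h

lemma zero_mem_tiltSet (m : ℕ) (X : ℕ → ℕ) (x : ℝ) (t : ℤ) :
    (0 : ℝ) ∈ tiltSet m X x t := by simp [tiltSet]

lemma lastLt_mem_tiltSet (m : ℕ) (X : ℕ → ℕ) (x : ℝ) (t : ℤ) :
    epsl m (lastLt m X x t) ∈ tiltSet m X x t := by simp [tiltSet]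

lemma lastLe_mem_tiltSet (m : ℕ) (X : ℕ → ℕ) (x : ℝ) (t : ℤ) :
    epsl m (lastLe m X x t) ∈ tiltSet m X x t := by simp [tiltSet]

lemma topA_mem_tiltSet (m : ℕ) (X : ℕ → ℕ) (x : ℝ) (t : ℤ) :
    epsl m (topA m X x) ∈ tiltSet m X x t := by simp [tiltSet]

lemma tilt_mem_cases {m : ℕ} {X : ℕ → ℕ} {x : ℝ} {t : ℤ} {e : ℝ}
    (he : e ∈ tiltSet m X x t) :
    e = 0 ∨ e = epsl m (lastLt m X x t) ∨ e = epsl m (lastLe m X x t) ∨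
      e = epsl m (topA m X x) := by
  simpa [tiltSet] using he

lemma tilt_nonneg {m : ℕ} {X : ℕ → ℕ} {x : ℝ} {t : ℤ} {e : ℝ}
    (he : e ∈ tiltSet m X x t) : 0 ≤ e := by
  rcases tilt_mem_cases he with h | h | h | h <;> subst h
  · exact le_refl _
  all_goals exact epsl_nonneg _ _

lemma tilt_le_top {m : ℕ} {X : ℕ → ℕ} {x : ℝ} {t : ℤ} {e : ℝ}
    (he : e ∈ tiltSet m X x t) : e ≤ epsl m (topA m X x) := by
  rcases tilt_mem_cases he with h | h | h | h <;> subst h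
  · exact epsl_nonneg _ _
  · exact epsl_mono m ((lastLt_le_lastLe m X x t).trans (lastLe_le_topA m X x t))
  · exact epsl_mono m (lastLe_le_topA m X x t)
  · exact le_refl _

lemma tilt_le_half {m : ℕ} {X : ℕ → ℕ} {x : ℝ} {t : ℤ} {e : ℝ}
    (he : e ∈ tiltSet m X x t) : e ≤ 1 / 2 :=
  (tilt_le_top he).trans (epsl_le_half _ _)

lemma mem_spread {m : ℕ} {X : ℕ → ℕ} {Y₀ : Finset (ℝ × ℤ)} {x e : ℝ} {t : ℤ}
    (hp : (x, t) ∈ Y₀) (he : e ∈ tiltSet m X x t) :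
    (x + e, t) ∈ spread m X Y₀ := by
  rw [spread, Finset.mem_biUnion]
  exact ⟨(x, t), hp, Finset.mem_image.mpr ⟨e, he, rfl⟩⟩

lemma subset_spread {m : ℕ} {X : ℕ → ℕ} {Y₀ : Finset (ℝ × ℤ)} :
    Y₀ ⊆ spread m X Y₀ := by
  intro p hp
  have := mem_spread (m := m) (X := X) (hp := hp) (he := zero_mem_tiltSet m X p.1 p.2)
  simpa using this

lemma acc_mem_seq {m : ℕ} {X : ℕ → ℕ} {x : ℝ} {c : ℕ} (hc : c ∈ accN m X x) :
    (x, (c : ℤ)) ∈ seqPoints m X := by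
  rw [accN, Finset.mem_filter] at hc
  rw [seqPoints, Finset.mem_image]
  exact ⟨c, hc.1, by rw [hc.2]⟩

/-! ### extra small lemmas -/

lemma lastLe_mono (m : ℕ) (X : ℕ → ℕ) (x : ℝ) {t t' : ℤ} (h : t ≤ t') :
    lastLe m X x t ≤ lastLe m X x t' := by
  unfold lastLe
  apply Finset.sup_mono
  intro a ha
  rw [Finset.mem_filter] at ha ⊢
  exact ⟨ha.1, ha.2.trans h⟩

lemma prod_ne_fst {x x' : ℝ} {y y' : ℤ} (h : x ≠ x') : (x, y) ≠ (x', y') :=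
  fun he => h (congrArg Prod.fst he)

lemma prod_ne_snd {x x' : ℝ} {y y' : ℤ} (h : y ≠ y') : (x, y) ≠ (x', y') :=
  fun he => h (congrArg Prod.snd he)

lemma inRect_mk {x1 x2 xr : ℝ} {y1 y2 yr : ℤ} (a : min x1 x2 ≤ xr)
    (b : xr ≤ max x1 x2) (c : min y1 y2 ≤ yr) (d : yr ≤ max y1 y2) :
    InRect (x1, y1) (x2, y2) (xr, yr) := ⟨a, b, c, d⟩

/-! ### the key witness lemma -/

set_option maxHeartbeats 2000000 in
lemma key (m : ℕ) (X : ℕ → ℕ) (Y₀ : Finset (ℝ × ℤ)) (hsat : Satisfied Y₀)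
    (hseq : seqPoints m X ⊆ Y₀) (hint : ∀ p ∈ Y₀, ∃ k : ℤ, p.1 = (k : ℝ))
    {z1 z2 : ℝ} {t1 t2 : ℤ} {e1 e2 : ℝ}
    (h1 : (z1, t1) ∈ Y₀) (h2 : (z2, t2) ∈ Y₀)
    (he1 : e1 ∈ tiltSet m X z1 t1) (he2 : e2 ∈ tiltSet m X z2 t2)
    (hlt : t1 < t2) (hne : z1 + e1 ≠ z2 + e2) :
    ∃ r ∈ spread m X Y₀, r ≠ (z1 + e1, t1) ∧ r ≠ (z2 + e2, t2) ∧
      InRect (z1 + e1, t1) (z2 + e2, t2) r := by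
  have e1half := tilt_le_half he1
  have e2half := tilt_le_half he2
  have e1n := tilt_nonneg he1
  have e2n := tilt_nonneg he2
  rcases lt_trichotomy z1 z2 with hz | hz | hz
  · -- Case II.a : z1 < z2
    obtain ⟨k1, hk1⟩ := hint _ h1
    obtain ⟨k2, hk2⟩ := hint _ h2
    have a1 : z1 = (k1 : ℝ) := hk1
    have a2 : z2 = (k2 : ℝ) := hk2
    have hz1 : z1 + 1 ≤ z2 := by
      have hk : k1 < k2 := by rw [a1, a2] at hz; exact_mod_cast hz
      have hk' : k1 + 1 ≤ k2 := hk
      rw [a1, a2]; exact_mod_cast hk'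
    obtain ⟨r, hrY, hrp, hrq, hrect⟩ := hsat (z1, t1) h1 (z2, t2) h2
      (ne_of_lt hz) (ne_of_lt hlt)
    obtain ⟨u, v⟩ := r
    have hu1 : z1 ≤ u := by
      have := hrect.1; rwa [min_eq_left (le_of_lt hz)] at this
    have hu2 : u ≤ z2 := by
      have := hrect.2.1; rwa [max_eq_right (le_of_lt hz)] at this
    have hv1 : t1 ≤ v := by
      have := hrect.2.2.1; rwa [min_eq_left (le_of_lt hlt)] at this
    have hv2 : v ≤ t2 := by
      have := hrect.2.2.2; rwa [max_eq_right (le_of_lt hlt)] at this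
    by_cases huz1 : u = z1
    · subst huz1
      have hvt1 : t1 < v := by
        rcases lt_or_eq_of_le hv1 with h | h
        · exact h
        · exact absurd (by rw [← h]) hrp
      have hwt := epsl_le_half m (topA m X u)
      refine ⟨(u + epsl m (topA m X u), v), mem_spread hrY (topA_mem_tiltSet m X u v),
        prod_ne_snd hvt1.ne', prod_ne_fst (by linarith), inRect_mk
          (min_le_iff.mpr (Or.inl (by linarith [tilt_le_top he1])))
          (le_max_iff.mpr (Or.inr (by linarith)))
          ((min_le_left t1 t2).trans hv1) (hv2.trans (le_max_right t1 t2))⟩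
    · by_cases huz2 : u = z2
      · subst huz2
        have hvt2 : v < t2 := by
          rcases lt_or_eq_of_le hv2 with h | h
          · exact h
          · exact absurd (by rw [h]) hrq
        refine ⟨(u, v), subset_spread hrY, prod_ne_fst (by intro h; linarith),
          prod_ne_snd hvt2.ne, inRect_mk
            (min_le_iff.mpr (Or.inl (by linarith)))
            (le_max_iff.mpr (Or.inr (by linarith)))
            ((min_le_left t1 t2).trans hv1) (hv2.trans (le_max_right t1 t2))⟩
      · obtain ⟨ku, hku⟩ := hint _ hrY
        have au : u = (ku : ℝ) := hku
        have hmid1 : z1 + 1 ≤ u := by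
          have : k1 < ku := by
            rw [a1, au] at hu1 huz1
            exact lt_of_le_of_ne (by exact_mod_cast hu1) (by
              intro h; exact huz1 (by exact_mod_cast h.symm))
          have h' : k1 + 1 ≤ ku := this
          rw [a1, au]; exact_mod_cast h'
        have hmid2 : u + 1 ≤ z2 := by
          have : ku < k2 := by
            rw [a2, au] at hu2 huz2
            exact lt_of_le_of_ne (by exact_mod_cast hu2) (by
              intro h; exact huz2 (by exact_mod_cast h))
          have h' : ku + 1 ≤ k2 := this
          rw [a2, au]; exact_mod_cast h'
        refine ⟨(u, v), subset_spread hrY, prod_ne_fst (by intro h; linarith),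
          prod_ne_fst (by intro h; linarith), inRect_mk
            (min_le_iff.mpr (Or.inl (by linarith)))
            (le_max_iff.mpr (Or.inr (by linarith)))
            ((min_le_left t1 t2).trans hv1) (hv2.trans (le_max_right t1 t2))⟩
  · -- Case I : same column
    subst hz
    have hee : e1 ≠ e2 := fun h => hne (by rw [h])
    by_cases hin2 : e2 ∈ tiltSet m X z1 t1
    · exact ⟨(z1 + e2, t1), mem_spread h1 hin2,
        prod_ne_fst (fun h => hee ((add_left_cancel h).symm)),
        prod_ne_snd hlt.ne, inRect_mk (min_le_right _ _) (le_max_right _ _)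
          (min_le_left t1 t2) (le_max_left t1 t2)⟩
    · by_cases hin1 : e1 ∈ tiltSet m X z1 t2
      · exact ⟨(z1 + e1, t2), mem_spread h2 hin1, prod_ne_snd hlt.ne',
          prod_ne_fst (fun h => hee (add_left_cancel h)),
          inRect_mk (min_le_left _ _) (le_max_left _ _)
            (min_le_right t1 t2) (le_max_right t1 t2)⟩
      · have he1' : e1 = epsl m (lastLt m X z1 t1) ∨ e1 = epsl m (lastLe m X z1 t1) := by
          rcases tilt_mem_cases he1 with h | h | h | h
          · exact absurd (h ▸ zero_mem_tiltSet m X z1 t2) hin1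
          · exact Or.inl h
          · exact Or.inr h
          · exact absurd (h ▸ topA_mem_tiltSet m X z1 t2) hin1
        have he1le : e1 ≤ epsl m (lastLe m X z1 t1) := by
          rcases he1' with h | h
          · rw [h]; exact epsl_mono m (lastLt_le_lastLe m X z1 t1)
          · rw [h]
        have he2' : e2 = epsl m (lastLt m X z1 t2) ∨ e2 = epsl m (lastLe m X z1 t2) := by
          rcases tilt_mem_cases he2 with h | h | h | h
          · exact absurd (h ▸ zero_mem_tiltSet m X z1 t1) hin2
          · exact Or.inl h
          · exact Or.inr h
          · exact absurd (h ▸ topA_mem_tiltSet m X z1 t1) hin2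
        rcases he2' with h2B | h2A
        · -- Branch B
          subst h2B
          by_cases hc0 : lastLt m X z1 t2 = 0
          · exact absurd (by rw [hc0, epsl_zero]; exact zero_mem_tiltSet m X z1 t1) hin2
          · obtain ⟨hcacc, hclt⟩ := lastLt_spec m X z1 t2 hc0
            have hcY : (z1, ((lastLt m X z1 t2 : ℕ) : ℤ)) ∈ Y₀ := hseq (acc_mem_seq hcacc)
            have hcts : epsl m (lastLt m X z1 t2) ∈
                tiltSet m X z1 ((lastLt m X z1 t2 : ℕ) : ℤ) := by
              have h := lastLe_mem_tiltSet m X z1 ((lastLt m X z1 t2 : ℕ) : ℤ)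
              rwa [lastLe_acc m X z1 hcacc] at h
            by_cases hct1 : t1 < ((lastLt m X z1 t2 : ℕ) : ℤ)
            · exact ⟨(z1 + epsl m (lastLt m X z1 t2), ((lastLt m X z1 t2 : ℕ) : ℤ)),
                mem_spread hcY hcts, prod_ne_snd hct1.ne', prod_ne_snd (ne_of_lt hclt),
                inRect_mk (min_le_right _ _) (le_max_right _ _)
                  (le_trans (min_le_left t1 t2) hct1.le) (hclt.le.trans (le_max_right t1 t2))⟩
            · have hceq : lastLe m X z1 t1 = lastLt m X z1 t2 :=
                le_antisymm (lastLe_le_lastLt m X z1 hlt)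
                  (le_lastLe m X z1 hcacc (not_lt.mp hct1))
              exact absurd (by rw [← hceq]; exact lastLe_mem_tiltSet m X z1 t1) hin2
        · -- Branch A
          subst h2A
          by_cases hc0 : lastLe m X z1 t2 = 0
          · exact absurd (by rw [hc0, epsl_zero]; exact zero_mem_tiltSet m X z1 t1) hin2
          · obtain ⟨hcacc, hcle⟩ := lastLe_spec m X z1 t2 hc0
            have hcY : (z1, ((lastLe m X z1 t2 : ℕ) : ℤ)) ∈ Y₀ := hseq (acc_mem_seq hcacc)
            have hcts : epsl m (lastLe m X z1 t2) ∈
                tiltSet m X z1 ((lastLe m X z1 t2 : ℕ) : ℤ) := by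
              have h := lastLe_mem_tiltSet m X z1 ((lastLe m X z1 t2 : ℕ) : ℤ)
              rwa [lastLe_acc m X z1 hcacc] at h
            by_cases hct1 : t1 < ((lastLe m X z1 t2 : ℕ) : ℤ)
            · by_cases hct2 : ((lastLe m X z1 t2 : ℕ) : ℤ) < t2
              · exact ⟨(z1 + epsl m (lastLe m X z1 t2), ((lastLe m X z1 t2 : ℕ) : ℤ)),
                  mem_spread hcY hcts, prod_ne_snd hct1.ne', prod_ne_snd (ne_of_lt hct2),
                  inRect_mk (min_le_right _ _) (le_max_right _ _)
                    (le_trans (min_le_left t1 t2) hct1.le) (hct2.le.trans (le_max_right t1 t2))⟩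
              · by_cases hb0 : lastLt m X z1 t2 = 0
                · have hz0 : lastLe m X z1 t1 = 0 :=
                    Nat.le_zero.mp (hb0 ▸ lastLe_le_lastLt m X z1 hlt)
                  have hz0' : lastLt m X z1 t1 = 0 :=
                    Nat.le_zero.mp (hz0 ▸ lastLt_le_lastLe m X z1 t1)
                  have he10 : e1 = 0 := by
                    rcases he1' with h | h
                    · rw [h, hz0', epsl_zero]
                    · rw [h, hz0, epsl_zero]
                  exact absurd (he10 ▸ zero_mem_tiltSet m X z1 t2) hin1
                · obtain ⟨hbacc, hblt⟩ := lastLt_spec m X z1 t2 hb0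
                  have hbY : (z1, ((lastLt m X z1 t2 : ℕ) : ℤ)) ∈ Y₀ :=
                    hseq (acc_mem_seq hbacc)
                  have hbts : epsl m (lastLt m X z1 t2) ∈
                      tiltSet m X z1 ((lastLt m X z1 t2 : ℕ) : ℤ) := by
                    have h := lastLe_mem_tiltSet m X z1 ((lastLt m X z1 t2 : ℕ) : ℤ)
                    rwa [lastLe_acc m X z1 hbacc] at h
                  have hbc : epsl m (lastLt m X z1 t2) ≤ epsl m (lastLe m X z1 t2) :=
                    epsl_mono m (lastLt_le_lastLe m X z1 t2)
                  have hE1b : lastLe m X z1 t1 ≤ lastLt m X z1 t2 :=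
                    lastLe_le_lastLt m X z1 hlt
                  have he1b : e1 ≤ epsl m (lastLt m X z1 t2) :=
                    he1le.trans (epsl_mono m hE1b)
                  by_cases hbt : t1 < ((lastLt m X z1 t2 : ℕ) : ℤ)
                  · exact ⟨(z1 + epsl m (lastLt m X z1 t2), ((lastLt m X z1 t2 : ℕ) : ℤ)),
                      mem_spread hbY hbts, prod_ne_snd hbt.ne', prod_ne_snd (ne_of_lt hblt),
                      inRect_mk (min_le_iff.mpr (Or.inl (by linarith)))
                        (le_max_iff.mpr (Or.inr (by linarith)))
                        (le_trans (min_le_left t1 t2) hbt.le)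
                        (hblt.le.trans (le_max_right t1 t2))⟩
                  · have heq : lastLe m X z1 t1 = lastLt m X z1 t2 :=
                      le_antisymm hE1b (le_lastLe m X z1 hbacc (not_lt.mp hbt))
                    refine ⟨(z1 + epsl m (lastLt m X z1 t2), t1),
                      mem_spread h1 (by rw [← heq]; exact lastLe_mem_tiltSet m X z1 t1),
                      prod_ne_fst ?_, prod_ne_snd hlt.ne,
                      inRect_mk (min_le_iff.mpr (Or.inl (by linarith)))
                        (le_max_iff.mpr (Or.inr (by linarith)))
                        (min_le_left t1 t2) (le_max_left t1 t2)⟩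
                    intro h
                    apply hin1
                    have hfe : e1 = epsl m (lastLt m X z1 t2) := (add_left_cancel h).symm
                    rw [hfe]
                    exact lastLt_mem_tiltSet m X z1 t2
            · have hceq : lastLe m X z1 t1 = lastLe m X z1 t2 :=
                le_antisymm (lastLe_mono m X z1 hlt.le)
                  (le_lastLe m X z1 hcacc (not_lt.mp hct1))
              exact absurd (by rw [← hceq]; exact lastLe_mem_tiltSet m X z1 t1) hin2
  · -- Case II.b : z2 < z1
    obtain ⟨k1, hk1⟩ := hint _ h1
    obtain ⟨k2, hk2⟩ := hint _ h2
    have a1 : z1 = (k1 : ℝ) := hk1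
    have a2 : z2 = (k2 : ℝ) := hk2
    have hz1 : z2 + 1 ≤ z1 := by
      have hk : k2 < k1 := by rw [a1, a2] at hz; exact_mod_cast hz
      have hk' : k2 + 1 ≤ k1 := hk
      rw [a1, a2]; exact_mod_cast hk'
    obtain ⟨r, hrY, hrp, hrq, hrect⟩ := hsat (z1, t1) h1 (z2, t2) h2
      (ne_of_gt hz) (ne_of_lt hlt)
    obtain ⟨u, v⟩ := r
    have hu1 : z2 ≤ u := by
      have := hrect.1; rwa [min_eq_right (le_of_lt hz)] at this
    have hu2 : u ≤ z1 := by
      have := hrect.2.1; rwa [max_eq_left (le_of_lt hz)] at this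
    have hv1 : t1 ≤ v := by
      have := hrect.2.2.1; rwa [min_eq_left (le_of_lt hlt)] at this
    have hv2 : v ≤ t2 := by
      have := hrect.2.2.2; rwa [max_eq_right (le_of_lt hlt)] at this
    by_cases huz1 : u = z1
    · subst huz1
      have hvt1 : t1 < v := by
        rcases lt_or_eq_of_le hv1 with h | h
        · exact h
        · exact absurd (by rw [← h]) hrp
      refine ⟨(u, v), subset_spread hrY, prod_ne_snd hvt1.ne',
        prod_ne_fst (by intro h; linarith), inRect_mk
          (min_le_iff.mpr (Or.inr (by linarith)))
          (le_max_iff.mpr (Or.inl (by linarith)))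
          ((min_le_left t1 t2).trans hv1) (hv2.trans (le_max_right t1 t2))⟩
    · by_cases huz2 : u = z2
      · subst huz2
        have hvt2 : v < t2 := by
          rcases lt_or_eq_of_le hv2 with h | h
          · exact h
          · exact absurd (by rw [h]) hrq
        have hwt := epsl_le_half m (topA m X u)
        refine ⟨(u + epsl m (topA m X u), v), mem_spread hrY (topA_mem_tiltSet m X u v),
          prod_ne_fst (by intro h; linarith), prod_ne_snd hvt2.ne, inRect_mk
            (min_le_iff.mpr (Or.inr (by linarith [tilt_le_top he2])))
            (le_max_iff.mpr (Or.inl (by linarith)))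
            ((min_le_left t1 t2).trans hv1) (hv2.trans (le_max_right t1 t2))⟩
      · obtain ⟨ku, hku⟩ := hint _ hrY
        have au : u = (ku : ℝ) := hku
        have hmid1 : z2 + 1 ≤ u := by
          have : k2 < ku := by
            rw [a2, au] at hu1 huz2
            exact lt_of_le_of_ne (by exact_mod_cast hu1) (by
              intro h; exact huz2 (by exact_mod_cast h.symm))
          have h' : k2 + 1 ≤ ku := this
          rw [a2, au]; exact_mod_cast h'
        have hmid2 : u + 1 ≤ z1 := by
          have : ku < k1 := by
            rw [a1, au] at hu2 huz1
            exact lt_of_le_of_ne (by exact_mod_cast hu2) (by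
              intro h; exact huz1 (by exact_mod_cast h))
          have h' : ku + 1 ≤ k1 := this
          rw [a1, au]; exact_mod_cast h'
        refine ⟨(u, v), subset_spread hrY, prod_ne_fst (by intro h; linarith),
          prod_ne_fst (by intro h; linarith), inRect_mk
            (min_le_iff.mpr (Or.inr (by linarith)))
            (le_max_iff.mpr (Or.inl (by linarith)))
            ((min_le_left t1 t2).trans hv1) (hv2.trans (le_max_right t1 t2))⟩

lemma spread_satisfied (m : ℕ) (X : ℕ → ℕ) (Y₀ : Finset (ℝ × ℤ)) (hsat : Satisfied Y₀)
    (hseq : seqPoints m X ⊆ Y₀) (hint : ∀ p ∈ Y₀, ∃ k : ℤ, p.1 = (k : ℝ)) :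
    Satisfied (spread m X Y₀) := by
  intro p hp q hq hx hy
  rw [spread, Finset.mem_biUnion] at hp hq
  obtain ⟨P, hPY, hp'⟩ := hp
  obtain ⟨e1, he1, hpe⟩ := Finset.mem_image.mp hp'
  obtain ⟨Q, hQY, hq'⟩ := hq
  obtain ⟨e2, he2, hqe⟩ := Finset.mem_image.mp hq'
  have hP' : (P.1, P.2) ∈ Y₀ := by simpa using hPY
  have hQ' : (Q.1, Q.2) ∈ Y₀ := by simpa using hQY
  subst hpe
  subst hqe
  dsimp only at hx hy ⊢
  rcases lt_or_gt_of_ne hy with h | h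
  · exact key m X Y₀ hsat hseq hint hP' hQ' he1 he2 h hx
  · obtain ⟨r, hr, hrq, hrp, hrect⟩ :=
      key m X Y₀ hsat hseq hint hQ' hP' he2 he1 h (Ne.symm hx)
    exact ⟨r, hr, hrp, hrq, inRect_symm hrect⟩

lemma split_subset_spread (m : ℕ) (X : ℕ → ℕ) (Y₀ : Finset (ℝ × ℤ))
    (hseq : seqPoints m X ⊆ Y₀) : splitSeq m X ⊆ spread m X Y₀ := by
  intro u hu
  rw [splitSeq, Finset.mem_image] at hu
  obtain ⟨t, ht, rfl⟩ := hu
  have hY : ((X t : ℝ), (t : ℤ)) ∈ Y₀ := hseq (by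
    rw [seqPoints, Finset.mem_image]; exact ⟨t, ht, rfl⟩)
  by_cases hf : ∀ s ∈ Finset.Icc 1 m, s < t → X s ≠ X t
  · rw [if_pos hf]
    have h := mem_spread (m := m) (X := X) hY (zero_mem_tiltSet m X ((X t : ℝ)) (t : ℤ))
    simpa using h
  · rw [if_neg hf]
    have htacc : t ∈ accN m X ((X t : ℝ)) := Finset.mem_filter.mpr ⟨ht, rfl⟩
    have hLe : lastLe m X ((X t : ℝ)) (t : ℤ) = t := lastLe_acc m X _ htacc
    have heq : epsl m (lastLe m X ((X t : ℝ)) (t : ℤ)) = (t : ℝ) / (2 * (m : ℝ)) := by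
      rw [hLe]; unfold epsl
      rw [min_eq_left (Finset.mem_Icc.mp ht).2]
    have h := mem_spread (m := m) (X := X) hY (lastLe_mem_tiltSet m X ((X t : ℝ)) (t : ℤ))
    rwa [heq] at h

lemma spread_card_le (m : ℕ) (X : ℕ → ℕ) (Y₀ : Finset (ℝ × ℤ)) :
    (spread m X Y₀).card ≤ 4 * Y₀.card := by
  rw [spread]
  refine le_trans Finset.card_biUnion_le ?_
  have hb : ∀ p ∈ Y₀, ((tiltSet m X p.1 p.2).image (fun e => (p.1 + e, p.2))).card ≤ 4 := by
    intro p hp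
    refine le_trans Finset.card_image_le ?_
    have h1 := Finset.card_insert_le (0 : ℝ)
      ({epsl m (lastLt m X p.1 p.2), epsl m (lastLe m X p.1 p.2),
        epsl m (topA m X p.1)} : Finset ℝ)
    have h2 := Finset.card_insert_le (epsl m (lastLt m X p.1 p.2))
      ({epsl m (lastLe m X p.1 p.2), epsl m (topA m X p.1)} : Finset ℝ)
    have h3 := Finset.card_insert_le (epsl m (lastLe m X p.1 p.2))
      ({epsl m (topA m X p.1)} : Finset ℝ)
    have h4 : ({epsl m (topA m X p.1)} : Finset ℝ).card = 1 := Finset.card_singleton _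
    unfold tiltSet
    omega
  calc ∑ p ∈ Y₀, ((tiltSet m X p.1 p.2).image (fun e => (p.1 + e, p.2))).card
      ≤ ∑ _p ∈ Y₀, 4 := Finset.sum_le_sum hb
    _ = 4 * Y₀.card := by rw [Finset.sum_const, smul_eq_mul, mul_comm]

lemma opt_split_le (m : ℕ) (X : ℕ → ℕ) :
    OPT (splitSeq m X) ≤ 4 * OPT (seqPoints m X) := by
  obtain ⟨Y, hXY, hYsat, hYcard⟩ := OPT_spec (seqPoints m X)
  have hsat₀ : Satisfied (Y.image fl) := floor_satisfied Y hYsat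
  have hseq₀ : seqPoints m X ⊆ Y.image fl := by
    intro u hu
    rw [seqPoints, Finset.mem_image] at hu
    obtain ⟨t, ht, rfl⟩ := hu
    rw [Finset.mem_image]
    refine ⟨((X t : ℝ), (t : ℤ)),
      hXY (by rw [seqPoints, Finset.mem_image]; exact ⟨t, ht, rfl⟩), ?_⟩
    simp [fl]
  have hint : ∀ p ∈ Y.image fl, ∃ k : ℤ, p.1 = (k : ℝ) := by
    intro p hp
    rw [Finset.mem_image] at hp
    obtain ⟨w, _, rfl⟩ := hp
    exact ⟨⌊w.1⌋, rfl⟩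
  calc OPT (splitSeq m X) ≤ (spread m X (Y.image fl)).card :=
        OPT_le_s12 (split_subset_spread m X _ hseq₀) (spread_satisfied m X _ hsat₀ hseq₀ hint)
    _ ≤ 4 * (Y.image fl).card := spread_card_le m X _
    _ ≤ 4 * Y.card := by
        have := Finset.card_image_le (s := Y) (f := fl)
        omega
    _ = 4 * OPT (seqPoints m X) := by rw [hYcard]

lemma core_ff (m : ℕ) (X : ℕ → ℕ) {t s : ℕ} (ht : t ∈ Finset.Icc 1 m)
    (hs : s ∈ Finset.Icc 1 m) (hne : t ≠ s)
    (hF : ∀ u ∈ Finset.Icc 1 m, u < t → X u ≠ X t)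
    (hG : ∀ u ∈ Finset.Icc 1 m, u < s → X u ≠ X s) :
    (X t : ℝ) ≠ (X s : ℝ) := by
  intro h
  have hXe : X t = X s := by exact_mod_cast h
  rcases Nat.lt_trichotomy t s with hc | hc | hc
  · exact hG t ht hc hXe
  · exact hne hc
  · exact hF s hs hc hXe.symm

lemma frac_pos_le {m s : ℕ} (hs1 : 1 ≤ s) (hs2 : s ≤ m) :
    0 < (s : ℝ) / (2 * m) ∧ (s : ℝ) / (2 * m) ≤ 1 / 2 := by
  have h2m : (0 : ℝ) < 2 * m := by
    have : 1 ≤ m := le_trans hs1 hs2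
    positivity
  constructor
  · apply div_pos _ h2m
    exact_mod_cast hs1
  · rw [div_le_div_iff₀ h2m (by norm_num)]
    have : (s : ℝ) ≤ m := by exact_mod_cast hs2
    linarith

lemma core_fn (m : ℕ) (X : ℕ → ℕ) {t s : ℕ} (hs1 : 1 ≤ s) (hs2 : s ≤ m) :
    (X t : ℝ) ≠ (X s : ℝ) + (s : ℝ) / (2 * m) := by
  obtain ⟨hp, hh⟩ := frac_pos_le hs1 hs2
  intro h
  rcases Nat.lt_trichotomy (X t) (X s) with hc | hc | hc
  · have : (X t : ℝ) < (X s : ℝ) := by exact_mod_cast hc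
    linarith
  · have : (X t : ℝ) = (X s : ℝ) := by exact_mod_cast hc
    rw [this] at h
    linarith
  · have : (X s : ℝ) + 1 ≤ (X t : ℝ) := by exact_mod_cast hc
    linarith

lemma core_nn (m : ℕ) (X : ℕ → ℕ) {t s : ℕ} (ht1 : 1 ≤ t) (ht2 : t ≤ m)
    (hs1 : 1 ≤ s) (hs2 : s ≤ m) (hne : t ≠ s) :
    (X t : ℝ) + (t : ℝ) / (2 * m) ≠ (X s : ℝ) + (s : ℝ) / (2 * m) := by
  obtain ⟨hpt, hht⟩ := frac_pos_le ht1 ht2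
  obtain ⟨hps, hhs⟩ := frac_pos_le hs1 hs2
  have h2m : (0 : ℝ) < 2 * m := by
    have : 1 ≤ m := le_trans ht1 ht2
    positivity
  intro h
  rcases Nat.lt_trichotomy (X t) (X s) with hc | hc | hc
  · have : (X t : ℝ) + 1 ≤ (X s : ℝ) := by exact_mod_cast hc
    linarith
  · have hXe : (X t : ℝ) = (X s : ℝ) := by exact_mod_cast hc
    rw [hXe] at h
    have hfe : (t : ℝ) / (2 * m) = (s : ℝ) / (2 * m) := by linarith
    field_simp at hfe
    have hm : (m : ℝ) ≠ 0 := ne_of_gt (by linarith)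
    rw [div_left_inj' hm] at hfe
    exact hne (by exact_mod_cast hfe)
  · have : (X s : ℝ) + 1 ≤ (X t : ℝ) := by exact_mod_cast hc
    linarith


/-- `split(X)` has pairwise distinct x-coordinates and pairwise distinct
y-coordinates, and `OPT(split(X)) ≤ 4 · OPT(X)`. -/
theorem split_is_permutation_and_opt_bound (n m : ℕ) (X : ℕ → ℕ)
    (hX : ∀ t ∈ Finset.Icc 1 m, X t ∈ Finset.Icc 1 n) :
    (∀ p ∈ splitSeq m X, ∀ q ∈ splitSeq m X, p ≠ q → p.1 ≠ q.1 ∧ p.2 ≠ q.2) ∧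
      OPT (splitSeq m X) ≤ 4 * OPT (seqPoints m X) := by
  constructor
  · intro p hp q hq hne
    rw [splitSeq, Finset.mem_image] at hp hq
    obtain ⟨t, ht, rfl⟩ := hp
    obtain ⟨s, hs, rfl⟩ := hq
    obtain ⟨ht1, ht2⟩ := Finset.mem_Icc.mp ht
    obtain ⟨hs1, hs2⟩ := Finset.mem_Icc.mp hs
    have hts : t ≠ s := by
      intro h
      subst h
      exact hne rfl
    constructor
    · show _ ≠ _
      split
      · split
        · next hF hG => exact core_ff m X ht hs hts hF hG
        · next hF hG => exact core_fn m X hs1 hs2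
      · split
        · next hF hG => exact fun h => core_fn m X ht1 ht2 h.symm
        · next hF hG => exact core_nn m X ht1 ht2 hs1 hs2 hts
    · show _ ≠ _
      split <;> split <;>
        · intro hcl
          have h2 : (t : ℤ) = (s : ℤ) := hcl
          exact hts (by exact_mod_cast h2)
  · exact opt_split_le m X
end

section
/- If S ⊆ ℝ×ℤ is a finite arborally satisfied point set, then the point set merge(S) = {(⌊x⌋, y) : (x, y) ∈ S} ⊆ ℤ×ℤ is arborally satisfied. -/
open scoped Classical

lemma InRect_symm {α β : Type*} [LinearOrder α] [LinearOrder β] {p q r : α × β}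
    (h : InRect p q r) : InRect q p r := by
  simpa [InRect, min_comm, max_comm] using h

lemma merge_key (S : Finset (ℝ × ℤ)) (hS : Satisfied S) (p q : ℝ × ℤ)
    (hp : p ∈ S) (hq : q ∈ S) (hx : ⌊p.1⌋ < ⌊q.1⌋) (hy : p.2 ≠ q.2) :
    ∃ r ∈ S, InRect p q r ∧ ((⌊r.1⌋ : ℤ), r.2) ≠ (⌊p.1⌋, p.2) ∧
      ((⌊r.1⌋ : ℤ), r.2) ≠ (⌊q.1⌋, q.2) := by
  by_contra hcon
  push_neg at hcon
  have hpq1 : p.1 < q.1 := by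
    by_contra h
    exact absurd (Int.floor_le_floor (le_of_not_gt h)) (not_le.mpr hx)
  set P := S.filter (fun r => r.2 = p.2 ∧ ⌊r.1⌋ = ⌊p.1⌋ ∧ p.1 ≤ r.1 ∧ r.1 ≤ q.1) with hPdef
  set Q := S.filter (fun r => r.2 = q.2 ∧ ⌊r.1⌋ = ⌊q.1⌋ ∧ p.1 ≤ r.1 ∧ r.1 ≤ q.1) with hQdef
  have hpP : p ∈ P := by
    simp [hPdef, Finset.mem_filter, hp, le_refl, hpq1.le]
  have hqQ : q ∈ Q := by
    simp [hQdef, Finset.mem_filter, hq, le_refl, hpq1.le]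
  obtain ⟨a, haP, hamax⟩ := P.exists_max_image (fun r => r.1) ⟨p, hpP⟩
  obtain ⟨b, hbQ, hbmin⟩ := Q.exists_min_image (fun r => r.1) ⟨q, hqQ⟩
  obtain ⟨haS, ha2, haf, ha1l, ha1r⟩ := Finset.mem_filter.mp haP
  obtain ⟨hbS, hb2, hbf, hb1l, hb1r⟩ := Finset.mem_filter.mp hbQ
  have hab : a.1 < b.1 := by
    by_contra h
    have := Int.floor_le_floor (le_of_not_gt h)
    rw [haf, hbf] at this
    exact absurd this (not_le.mpr hx)
  have hne2 : a.2 ≠ b.2 := by rw [ha2, hb2]; exact hy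
  obtain ⟨c, hcS, hca, hcb, hcrect⟩ := hS a haS b hbS hab.ne hne2
  obtain ⟨hc1l, hc1r, hc2l, hc2r⟩ := hcrect
  rw [min_eq_left hab.le] at hc1l
  rw [max_eq_right hab.le] at hc1r
  have hcpl : p.1 ≤ c.1 := le_trans ha1l hc1l
  have hcqr : c.1 ≤ q.1 := le_trans hc1r hb1r
  have hcrectPQ : InRect p q c := by
    refine ⟨?_, ?_, ?_, ?_⟩
    · rw [min_eq_left hpq1.le]; exact hcpl
    · rw [max_eq_right hpq1.le]; exact hcqr
    · rw [← ha2, ← hb2]; exact hc2l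
    · rw [← ha2, ← hb2]; exact hc2r
  by_cases hcase : ((⌊c.1⌋ : ℤ), c.2) = (⌊p.1⌋, p.2)
  · obtain ⟨hcf, hcy⟩ := Prod.mk.inj hcase
    have hcP : c ∈ P := Finset.mem_filter.mpr ⟨hcS, hcy, hcf, hcpl, hcqr⟩
    have h1 : c.1 ≤ a.1 := hamax c hcP
    have : c = a := Prod.ext (le_antisymm h1 hc1l) (by rw [hcy, ← ha2])
    exact hca this
  · have hcase' := hcon c hcS hcrectPQ hcase
    obtain ⟨hcf, hcy⟩ := Prod.mk.inj hcase'
    have hcQ : c ∈ Q := Finset.mem_filter.mpr ⟨hcS, hcy, hcf, hcpl, hcqr⟩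
    have h1 : b.1 ≤ c.1 := hbmin c hcQ
    have : c = b := Prod.ext (le_antisymm hc1r h1) (by rw [hcy, ← hb2])
    exact hcb this

/-- If `S ⊆ ℝ × ℤ` is a finite arborally satisfied point set, then
`merge(S) = {(⌊x⌋, y) : (x,y) ∈ S}` is arborally satisfied. -/
theorem merge_preserves_satisfied (S : Finset (ℝ × ℤ)) (hS : Satisfied S) :
    Satisfied (S.image fun p => ((⌊p.1⌋ : ℤ), p.2)) := by
  intro p' hp' q' hq' hx hy
  obtain ⟨p, hp, rfl⟩ := Finset.mem_image.mp hp'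
  obtain ⟨q, hq, rfl⟩ := Finset.mem_image.mp hq'
  simp only at hx hy
  have main : ∀ r : ℝ × ℤ, InRect p q r →
      InRect ((⌊p.1⌋ : ℤ), p.2) ((⌊q.1⌋ : ℤ), q.2) ((⌊r.1⌋ : ℤ), r.2) := by
    rintro r ⟨h1, h2, h3, h4⟩
    refine ⟨?_, ?_, h3, h4⟩
    · calc min (⌊p.1⌋ : ℤ) ⌊q.1⌋ = ⌊min p.1 q.1⌋ := (Int.floor_mono.map_min).symm
        _ ≤ ⌊r.1⌋ := Int.floor_le_floor h1
    · calc (⌊r.1⌋ : ℤ) ≤ ⌊max p.1 q.1⌋ := Int.floor_le_floor h2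
        _ = max ⌊p.1⌋ ⌊q.1⌋ := Int.floor_mono.map_max
  rcases lt_or_gt_of_ne hx with h | h
  · obtain ⟨r, hrS, hrect, hrp, hrq⟩ := merge_key S hS p q hp hq h hy
    exact ⟨(⌊r.1⌋, r.2), Finset.mem_image.mpr ⟨r, hrS, rfl⟩, hrp, hrq, main r hrect⟩
  · obtain ⟨r, hrS, hrect, hrq, hrp⟩ := merge_key S hS q p hq hp h hy.symm
    exact ⟨(⌊r.1⌋, r.2), Finset.mem_image.mpr ⟨r, hrS, rfl⟩, hrp, hrq,
      main r (InRect_symm hrect)⟩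
end

section
/- Consider the execution of Greedy on a permutation X of [n] with initial tree T, and for b ∈ [n] let τ(b, t) denote the largest time ≤ t at which (b, ·) belongs to the output (times ≤ 0 coming from the initial tree). Suppose at time t ≥ 0 there are elements w < x < y in [n] with τ(w, t) ≥ τ(x, t) and τ(y, t) ≥ τ(x, t). If t' > t and no access point (X(s), s) with t < s ≤ t' satisfies w < X(s) < y, then x is not touched at any time s with t < s ≤ t' (i.e. no point (x, s) is added for t < s ≤ t'). -/
open scoped Classical

/-! ### Auxiliary lemmas for the hidden-elements theorem -/

section HiddenAux

/-- Partial run of (one-sided) Greedy for the first `k` steps. -/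
noncomputable def partialRun (n : ℕ) (side : ℕ → ℕ → Prop) (X : ℕ → ℕ)
    (init : Finset (ℕ × ℤ)) (k : ℕ) : Finset (ℕ × ℤ) :=
  (List.range k).foldl (fun S t => greedyStep n side S (X (t + 1)) ((t : ℤ) + 1)) init

lemma greedyRun_eq_partialRun (n : ℕ) (side : ℕ → ℕ → Prop) (X : ℕ → ℕ)
    (init : Finset (ℕ × ℤ)) : greedyRun n side X init = partialRun n side X init n := rfl

lemma partialRun_succ (n : ℕ) (side : ℕ → ℕ → Prop) (X : ℕ → ℕ)
    (init : Finset (ℕ × ℤ)) (k : ℕ) :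
    partialRun n side X init (k + 1)
      = greedyStep n side (partialRun n side X init k) (X (k + 1)) ((k : ℤ) + 1) := by
  unfold partialRun
  rw [List.range_succ, List.foldl_append]
  rfl

lemma subset_greedyStep (n : ℕ) (side : ℕ → ℕ → Prop) (S : Finset (ℕ × ℤ))
    (a : ℕ) (t : ℤ) : S ⊆ greedyStep n side S a t :=
  Finset.Subset.trans Finset.subset_union_left (Finset.subset_insert _ _)

lemma mem_greedyStep_cases {n : ℕ} {side : ℕ → ℕ → Prop} {S : Finset (ℕ × ℤ)}
    {a : ℕ} {t : ℤ} {p : ℕ × ℤ} (hp : p ∈ greedyStep n side S a t) :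
    p ∈ S ∨ p = (a, t) ∨ (p.2 = t ∧ p.1 ∈ Finset.Icc 1 n ∧ side a p.1 ∧
      RectEmpty S (a, t) (p.1, tau S p.1)) := by
  classical
  simp only [greedyStep, Finset.mem_insert, Finset.mem_union, Finset.mem_image,
    Finset.mem_filter] at hp
  rcases hp with h | h | ⟨b, ⟨hb, hside, _, hrect⟩, hbe⟩
  · exact Or.inr (Or.inl h)
  · exact Or.inl h
  · refine Or.inr (Or.inr ?_)
    have h1 : p.1 = b := by rw [← hbe]
    have h2 : p.2 = t := by rw [← hbe]
    rw [h1, h2]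
    exact ⟨rfl, hb, hside, hrect⟩

lemma partialRun_mono (n : ℕ) (side : ℕ → ℕ → Prop) (X : ℕ → ℕ)
    (init : Finset (ℕ × ℤ)) {j k : ℕ} (hjk : j ≤ k) :
    partialRun n side X init j ⊆ partialRun n side X init k := by
  induction k with
  | zero => simpa [Nat.le_zero.mp hjk] using Finset.Subset.refl _
  | succ k ih =>
    rcases Nat.eq_or_lt_of_le hjk with h | h
    · rw [h]
    · exact (ih (Nat.lt_succ_iff.mp h)).trans
        (by rw [partialRun_succ]; exact subset_greedyStep _ _ _ _ _)

lemma partialRun_snd_le (n : ℕ) (side : ℕ → ℕ → Prop) (X : ℕ → ℕ)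
    {init : Finset (ℕ × ℤ)} (hinit : ∀ q ∈ init, q.2 ≤ 0) (k : ℕ) :
    ∀ p ∈ partialRun n side X init k, p.2 ≤ (k : ℤ) := by
  induction k with
  | zero => intro p hp; exact hinit p hp
  | succ k ih =>
    intro p hp
    rw [partialRun_succ] at hp
    rcases mem_greedyStep_cases hp with h | h | h
    · have := ih p h; push_cast; omega
    · rw [h]; push_cast; omega
    · rw [h.1]; push_cast; omega

lemma partialRun_mem_down (n : ℕ) (side : ℕ → ℕ → Prop) (X : ℕ → ℕ)
    {init : Finset (ℕ × ℤ)} (hinit : ∀ q ∈ init, q.2 ≤ 0) {j k : ℕ} (hjk : j ≤ k)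
    {p : ℕ × ℤ} (hp : p ∈ partialRun n side X init k) (hpj : p.2 ≤ (j : ℤ)) :
    p ∈ partialRun n side X init j := by
  induction k with
  | zero => rwa [Nat.le_zero.mp hjk]
  | succ k ih =>
    rcases Nat.eq_or_lt_of_le hjk with h | h
    · rwa [h]
    · have hjk' : j ≤ k := Nat.lt_succ_iff.mp h
      rw [partialRun_succ] at hp
      rcases mem_greedyStep_cases hp with hc | hc | hc
      · exact ih hjk' hc
      · exfalso; rw [hc] at hpj; simp only at hpj
        have : (j : ℤ) ≤ (k : ℤ) := by exact_mod_cast hjk'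
        omega
      · exfalso; rw [hc.1] at hpj
        have : (j : ℤ) ≤ (k : ℤ) := by exact_mod_cast hjk'
        omega

lemma tau_ge {S : Finset (ℕ × ℤ)} {b : ℕ} {c : ℤ} (h : (b, c) ∈ S) : c ≤ tau S b := by
  classical
  have hc : c ∈ (S.filter (fun p => p.1 = b)).image Prod.snd := by
    simp only [Finset.mem_image, Finset.mem_filter]
    exact ⟨(b, c), ⟨h, rfl⟩, rfl⟩
  have hle := Finset.le_max hc
  unfold tau
  cases hm : ((S.filter (fun p => p.1 = b)).image Prod.snd).max with
  | bot => rw [hm] at hle; simp at hle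
  | coe M => rw [hm] at hle; simpa using hle

lemma tau_mem {S : Finset (ℕ × ℤ)} {b : ℕ} {c : ℤ} (h : (b, c) ∈ S) :
    (b, tau S b) ∈ S := by
  classical
  have hne : ((S.filter (fun p => p.1 = b)).image Prod.snd).Nonempty :=
    ⟨c, by simp only [Finset.mem_image, Finset.mem_filter]; exact ⟨(b, c), ⟨h, rfl⟩, rfl⟩⟩
  obtain ⟨M, hM⟩ := Finset.max_of_nonempty hne
  have hMm : M ∈ (S.filter (fun p => p.1 = b)).image Prod.snd := Finset.mem_of_max hM
  simp only [Finset.mem_image, Finset.mem_filter] at hMm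
  obtain ⟨q, ⟨hq, hq1⟩, hq2⟩ := hMm
  have : tau S b = M := by unfold tau; rw [hM]; rfl
  rw [this]
  have : q = (b, M) := by
    cases q; simp only at hq1 hq2; rw [hq1, hq2]
  rwa [this] at hq

lemma tauAt_ge {G : Finset (ℕ × ℤ)} {b : ℕ} {c t : ℤ} (h : (b, c) ∈ G) (hc : c ≤ t) :
    c ≤ tauAt G b t := by
  classical
  have hcm : c ∈ ((G.filter (fun p => p.1 = b ∧ p.2 ≤ t)).image Prod.snd) := by
    simp only [Finset.mem_image, Finset.mem_filter]
    exact ⟨(b, c), ⟨h, rfl, hc⟩, rfl⟩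
  have hle := Finset.le_max hcm
  unfold tauAt
  cases hm : ((G.filter (fun p => p.1 = b ∧ p.2 ≤ t)).image Prod.snd).max with
  | bot => rw [hm] at hle; simp at hle
  | coe M => rw [hm] at hle; simpa using hle

lemma tauAt_mem {G : Finset (ℕ × ℤ)} {b : ℕ} {c t : ℤ} (h : (b, c) ∈ G) (hc : c ≤ t) :
    (b, tauAt G b t) ∈ G ∧ tauAt G b t ≤ t := by
  classical
  have hne : ((G.filter (fun p => p.1 = b ∧ p.2 ≤ t)).image Prod.snd).Nonempty :=
    ⟨c, by simp only [Finset.mem_image, Finset.mem_filter]; exact ⟨(b, c), ⟨h, rfl, hc⟩, rfl⟩⟩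
  obtain ⟨M, hM⟩ := Finset.max_of_nonempty hne
  have hMm : M ∈ (G.filter (fun p => p.1 = b ∧ p.2 ≤ t)).image Prod.snd := Finset.mem_of_max hM
  simp only [Finset.mem_image, Finset.mem_filter] at hMm
  obtain ⟨q, ⟨hq, hq1, hq3⟩, hq2⟩ := hMm
  have he : tauAt G b t = M := by unfold tauAt; rw [hM]; rfl
  rw [he]
  have hqe : q = (b, M) := by
    cases q; simp only at hq1 hq2; rw [hq1, hq2]
  rw [hqe] at hq hq3
  exact ⟨hq, hq3⟩

lemma initialSet_snd_le (T : BTree) (n : ℕ) : ∀ q ∈ initialSet T n, q.2 ≤ 0 := by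
  intro q hq
  simp only [initialSet, Finset.mem_biUnion, Finset.mem_image, Finset.mem_Icc] at hq
  obtain ⟨b, _, s, hs, hqe⟩ := hq
  rw [← hqe]
  exact hs.2

lemma mem_initialSet_zero (T : BTree) (n : ℕ) {b : ℕ} (hb : b ∈ Finset.Icc 1 n) :
    (b, (0 : ℤ)) ∈ initialSet T n := by
  simp only [initialSet, Finset.mem_biUnion, Finset.mem_image, Finset.mem_Icc]
  refine ⟨b, Finset.mem_Icc.mp hb, 0, ⟨?_, le_refl _⟩, rfl⟩
  have hd : T.depthOf b ≤ T.maxDepth n := Finset.le_sup hb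
  have : (T.depthOf b : ℤ) ≤ (T.maxDepth n : ℤ) := by exact_mod_cast hd
  omega

end HiddenAux

/-- (Hidden elements.) In the execution of Greedy on a permutation `X` of
`[n]` with initial tree `T`, if at time `t ≥ 0` there are `w < x < y` with
`τ(w,t) ≥ τ(x,t)` and `τ(y,t) ≥ τ(x,t)`, and no access in the open interval `(w, y)` occurs
at times in `(t, t']`, then `x` is not touched at any time in `(t, t']`. -/
theorem greedy_hidden_in_interval (n : ℕ) (X : ℕ → ℕ) (hX : IsPermOn n X)
    (T : BTree) (hT : IsBSTOn T n)
    (G : Finset (ℕ × ℤ)) (hG : G = greedyRun n (fun _ _ => True) X (initialSet T n))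
    (w x y : ℕ) (hw : 1 ≤ w) (hy : y ≤ n) (hwx : w < x) (hxy : x < y)
    (t : ℤ) (ht : 0 ≤ t)
    (htauw : tauAt G x t ≤ tauAt G w t) (htauy : tauAt G x t ≤ tauAt G y t)
    (t' : ℤ) (htt' : t < t')
    (hacc : ∀ s ∈ Finset.Icc 1 n, t < (s : ℤ) → (s : ℤ) ≤ t' → ¬(w < X s ∧ X s < y)) :
    ∀ s : ℤ, t < s → s ≤ t' → (x, s) ∉ G := by
  classical
  have hinit0 : ∀ q ∈ initialSet T n, q.2 ≤ 0 := initialSet_snd_le T n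
  set side : ℕ → ℕ → Prop := fun _ _ => True with hsd
  set init := initialSet T n with hin
  set S : ℕ → Finset (ℕ × ℤ) := fun k => partialRun n side X init k with hSdef
  have hGS : G = S n := hG
  set m : ℕ := min n t.toNat with hm
  have hmn : m ≤ n := min_le_left _ _
  have hmt : (m : ℤ) ≤ t := by
    have h1 : (m : ℤ) ≤ (t.toNat : ℤ) := by exact_mod_cast min_le_right n t.toNat
    omega
  -- basic index-membership facts
  have hwI : w ∈ Finset.Icc 1 n := Finset.mem_Icc.mpr ⟨hw, by omega⟩
  have hxI : x ∈ Finset.Icc 1 n := Finset.mem_Icc.mpr ⟨by omega, by omega⟩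
  have hyI : y ∈ Finset.Icc 1 n := Finset.mem_Icc.mpr ⟨by omega, hy⟩
  have hcol : ∀ b ∈ Finset.Icc 1 n, ∀ k : ℕ, (b, (0 : ℤ)) ∈ S k := by
    intro b hb k
    exact partialRun_mono n side X init (Nat.zero_le k) (mem_initialSet_zero T n hb)
  have hsnd : ∀ k : ℕ, ∀ p ∈ S k, p.2 ≤ (k : ℤ) :=
    fun k => partialRun_snd_le n side X hinit0 k
  -- link between `tauAt G · t` and `tau (S m) ·`
  have hlink : ∀ b ∈ Finset.Icc 1 n, tauAt G b t = tau (S m) b := by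
    intro b hb
    apply le_antisymm
    · have h0G : (b, (0 : ℤ)) ∈ G := by rw [hGS]; exact hcol b hb n
      obtain ⟨hmem0, hle⟩ := tauAt_mem h0G ht
      have hmem : (b, tauAt G b t) ∈ S n := by rw [← hGS]; exact hmem0
      have h2 : tauAt G b t ≤ (m : ℤ) := by
        have h3 := hsnd n _ hmem
        simp only at h3
        have h4 : (m : ℤ) = min (n : ℤ) (t.toNat : ℤ) := by
          rw [hm, Nat.cast_min]
        omega
      exact tau_ge (partialRun_mem_down n side X hinit0 hmn hmem h2)
    · have hmem : (b, tau (S m) b) ∈ S m := tau_mem (hcol b hb m)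
      have hle : tau (S m) b ≤ t := le_trans (hsnd m _ hmem) hmt
      exact tauAt_ge (by rw [hGS]; exact partialRun_mono n side X init hmn hmem) hle
  -- the key induction
  have key : ∀ k : ℕ, m ≤ k → k ≤ n →
      ∀ p ∈ S k, p.1 = x → t < p.2 → t' < p.2 := by
    intro k
    induction k with
    | zero =>
      intro _ _ p hp _ hpt
      have := hsnd 0 p hp
      omega
    | succ k ih =>
      intro hmk hkn p hp hpx hpt
      rcases Nat.eq_or_lt_of_le hmk with he | hlt
      · exfalso
        have h1 := hsnd (k + 1) p hp
        rw [← he] at h1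
        omega
      · have hmk' : m ≤ k := Nat.lt_succ_iff.mp hlt
        have hkn' : k ≤ n := Nat.le_of_succ_le hkn
        have hstep : S (k + 1) = greedyStep n side (S k) (X (k + 1)) ((k : ℤ) + 1) :=
          partialRun_succ n side X init k
        rw [hstep] at hp
        rcases mem_greedyStep_cases hp with hc | hc | hc
        · exact ih hmk' hkn' p hc hpx hpt
        · -- p is the access point; then X (k+1) = x, contradicting hacc
          by_cases hk' : t' < (k : ℤ) + 1
          · rw [hc]; exact hk'
          · exfalso
            push_neg at hk'
            have hpt2 : p.2 = (k : ℤ) + 1 := by rw [hc]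
            have hk1I : (k + 1 : ℕ) ∈ Finset.Icc 1 n := Finset.mem_Icc.mpr ⟨by omega, hkn⟩
            have hx1 : X (k + 1) = x := by
              have : p.1 = X (k + 1) := by rw [hc]
              rw [← this, hpx]
            exact hacc (k + 1) hk1I (by push_cast; omega) (by push_cast; omega)
              (by rw [hx1]; exact ⟨hwx, hxy⟩)
        · -- p is a touch point of column x
          obtain ⟨hpt2, _, _, hrect⟩ := hc
          by_cases hk' : t' < (k : ℤ) + 1
          · rw [hpt2]; exact hk'
          · exfalso
            push_neg at hk'
            rw [hpx] at hrect
            -- all x-points of S k lie at times ≤ t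
            have hxk : ∀ q ∈ S k, q.1 = x → q.2 ≤ t := by
              intro q hq hqx
              by_contra hqt
              push_neg at hqt
              have h1 := ih hmk' hkn' q hq hqx hqt
              have h2 := hsnd k q hq
              omega
            -- tau (S k) x = tau (S m) x
            have htaux : tau (S k) x = tau (S m) x := by
              apply le_antisymm
              · have hmem : (x, tau (S k) x) ∈ S k := tau_mem (hcol x hxI k)
                have h1 : tau (S k) x ≤ t := hxk _ hmem rfl
                have h2 : tau (S k) x ≤ (m : ℤ) := by
                  have h3 := hsnd k _ hmem
                  simp only at h3
                  have h4 : (m : ℤ) = min (n : ℤ) (t.toNat : ℤ) := by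
                    rw [hm, Nat.cast_min]
                  have h5 : (k : ℤ) ≤ (n : ℤ) := by exact_mod_cast hkn'
                  omega
                exact tau_ge (partialRun_mem_down n side X hinit0 hmk' hmem h2)
              · exact tau_ge (partialRun_mono n side X init hmk' (tau_mem (hcol x hxI m)))
            have htw : tau (S k) x ≤ tau (S k) w := by
              have h1 : tau (S m) w ≤ tau (S k) w :=
                tau_ge (partialRun_mono n side X init hmk' (tau_mem (hcol w hwI m)))
              rw [htaux, ← hlink x hxI, ← hlink w hwI] at *
              omega
            have hty : tau (S k) x ≤ tau (S k) y := by
              have h1 : tau (S m) y ≤ tau (S k) y :=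
                tau_ge (partialRun_mono n side X init hmk' (tau_mem (hcol y hyI m)))
              rw [htaux, ← hlink x hxI, ← hlink y hyI] at *
              omega
            have htxt : tau (S k) x ≤ t := hxk _ (tau_mem (hcol x hxI k)) rfl
            have htwk : tau (S k) w ≤ (k : ℤ) := hsnd k _ (tau_mem (hcol w hwI k))
            have htyk : tau (S k) y ≤ (k : ℤ) := hsnd k _ (tau_mem (hcol y hyI k))
            -- the access value avoids (w, y)
            have hk1I : (k + 1 : ℕ) ∈ Finset.Icc 1 n := Finset.mem_Icc.mpr ⟨by omega, hkn⟩
            have havoid := hacc (k + 1) hk1I (by push_cast; omega) (by push_cast; omega)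
            set a := X (k + 1) with ha
            have hcases : a ≤ w ∨ y ≤ a := by omega
            rcases hcases with hcw | hcy
            · -- witness (w, tau (S k) w) in the rectangle
              have hwit : (w, tau (S k) w) ∈ S k := tau_mem (hcol w hwI k)
              have hIn : InRect (a, (k : ℤ) + 1) (x, tau (S k) x) (w, tau (S k) w) := by
                refine ⟨?_, ?_, ?_, ?_⟩
                · simp only [min_le_iff]; left; exact hcw
                · simp only [le_max_iff]; right; omega
                · simp only [min_le_iff]; right; exact htw
                · simp only [le_max_iff]; left; omega
              rcases hrect _ hwit hIn with h | h
              · have h2 : tau (S k) w = (k : ℤ) + 1 := congrArg Prod.snd h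
                omega
              · have h2 : w = x := congrArg Prod.fst h
                omega
            · -- witness (y, tau (S k) y) in the rectangle
              have hwit : (y, tau (S k) y) ∈ S k := tau_mem (hcol y hyI k)
              have hIn : InRect (a, (k : ℤ) + 1) (x, tau (S k) x) (y, tau (S k) y) := by
                refine ⟨?_, ?_, ?_, ?_⟩
                · simp only [min_le_iff]; right; omega
                · simp only [le_max_iff]; left; exact hcy
                · simp only [min_le_iff]; right; exact hty
                · simp only [le_max_iff]; left; omega
              rcases hrect _ hwit hIn with h | h
              · have h2 : tau (S k) y = (k : ℤ) + 1 := congrArg Prod.snd h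
                omega
              · have h2 : y = x := congrArg Prod.fst h
                omega
  intro s hs hs' hmem
  rw [hGS] at hmem
  have h1 : t' < s := key n hmn le_rfl (x, s) hmem rfl hs
  omega
end
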